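/- arXiv:1307.1524 — 11 statements merged into one kernel-verified Lean document; each statement's English description precedes it below -/
import Mathlib

section
/- Let N ≥ 2 be an integer. For every real number y ≥ 0 with y ≠ 1 one has ((N−1)·(1 − y^(N+1)) − (N+1)·y·(1 − y^(N−1))) / (1 − y) > 0. -/
/-! Dividing the numerator by `1 - y` leaves the palindromic polynomial
`(N - 1)(1 + y^N) - 2(y + ⋯ + y^(N-1))`, which equals `∑_{k=0}^{N} (1 - y^k)(1 - y^(N-k))`.
For `y ≥ 0` the two factors of each term have the same sign, and the term `k = 1`
is strictly positive as soon as `y ≠ 1` and `N ≥ 2`. -/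

open Finset

section Ordered

variable {R : Type*} [CommRing R] [LinearOrder R] [IsStrictOrderedRing R] {y : R}

theorem one_sub_pow_mul_one_sub_pow_nonneg (hy : 0 ≤ y) (a b : ℕ) :
    0 ≤ (1 - y ^ a) * (1 - y ^ b) := by
  rcases le_total y 1 with h | h
  · exact mul_nonneg (sub_nonneg.2 (pow_le_one₀ hy h)) (sub_nonneg.2 (pow_le_one₀ hy h))
  · exact mul_nonneg_of_nonpos_of_nonpos (sub_nonpos.2 (one_le_pow₀ h))
      (sub_nonpos.2 (one_le_pow₀ h))

theorem one_sub_pow_mul_one_sub_pow_pos (hy : 0 ≤ y) (hy1 : y ≠ 1) {a b : ℕ} (ha : a ≠ 0)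
    (hb : b ≠ 0) : 0 < (1 - y ^ a) * (1 - y ^ b) := by
  rcases hy1.lt_or_gt with h | h
  · exact mul_pos (sub_pos.2 (pow_lt_one₀ hy h ha)) (sub_pos.2 (pow_lt_one₀ hy h hb))
  · exact mul_pos_of_neg_of_neg (sub_neg.2 (one_lt_pow₀ h ha)) (sub_neg.2 (one_lt_pow₀ h hb))

theorem sum_range_one_sub_pow_mul_one_sub_pow_pos (hy : 0 ≤ y) (hy1 : y ≠ 1) {N : ℕ}
    (hN : 2 ≤ N) : 0 < ∑ k ∈ range (N + 1), (1 - y ^ k) * (1 - y ^ (N - k)) :=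
  sum_pos' (fun k _ ↦ one_sub_pow_mul_one_sub_pow_nonneg hy k (N - k))
    ⟨1, mem_range.2 (by omega), one_sub_pow_mul_one_sub_pow_pos hy hy1 one_ne_zero (by omega)⟩

end Ordered

section Identity

variable {R : Type*} [CommRing R]

theorem sum_range_one_sub_pow_mul_one_sub_pow (y : R) (N : ℕ) :
    ∑ k ∈ range (N + 1), (1 - y ^ k) * (1 - y ^ (N - k)) =
      (N + 1) * (1 + y ^ N) - 2 * ∑ k ∈ range (N + 1), y ^ k := by
  have hsplit : ∀ k ∈ range (N + 1),
      (1 - y ^ k) * (1 - y ^ (N - k)) = (1 + y ^ N) - y ^ k - y ^ (N - k) := by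
    intro k hk
    rw [show y ^ N = y ^ k * y ^ (N - k) by rw [← pow_add, Nat.add_sub_cancel' (by grind)]]
    ring
  have hreflect : ∑ k ∈ range (N + 1), y ^ (N - k) = ∑ k ∈ range (N + 1), y ^ k :=
    sum_range_reflect (y ^ ·) (N + 1)
  rw [sum_congr rfl hsplit, sum_sub_distrib, sum_sub_distrib, hreflect, sum_const, card_range,
    nsmul_eq_mul]
  push_cast
  ring

theorem one_sub_mul_sum_range_one_sub_pow_mul_one_sub_pow (y : R) {N : ℕ} (hN : 1 ≤ N) :
    (1 - y) * ∑ k ∈ range (N + 1), (1 - y ^ k) * (1 - y ^ (N - k)) =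
      ((N : R) - 1) * (1 - y ^ (N + 1)) - ((N : R) + 1) * y * (1 - y ^ (N - 1)) := by
  obtain ⟨n, rfl⟩ : ∃ n, N = n + 1 := ⟨N - 1, by omega⟩
  rw [sum_range_one_sub_pow_mul_one_sub_pow, mul_sub, mul_left_comm _ 2, mul_neg_geom_sum,
    Nat.add_sub_cancel]
  push_cast
  ring

end Identity

/-- For an integer `N ≥ 2` and real `y ≥ 0` with `y ≠ 1`, the quantity
`((N−1)·(1 − y^(N+1)) − (N+1)·y·(1 − y^(N−1))) / (1 − y)` is strictly positive. -/
theorem stmt_1 (N : ℕ) (hN : 2 ≤ N) (y : ℝ) (hy : 0 ≤ y) (hy1 : y ≠ 1) :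
    0 < (((N : ℝ) - 1) * (1 - y ^ (N + 1)) - ((N : ℝ) + 1) * y * (1 - y ^ (N - 1))) / (1 - y) := by
  rw [← one_sub_mul_sum_range_one_sub_pow_mul_one_sub_pow y (by omega : 1 ≤ N),
    mul_div_cancel_left₀ _ (sub_ne_zero.2 hy1.symm)]
  exact sum_range_one_sub_pow_mul_one_sub_pow_pos hy hy1 hN
end

section
/- Let a > 0 be a real number and N ≥ 2 an integer, and define g : ℝ → ℝ by g(x) = 1 − (1 − a·x)/(1 − (a·x)^N) when a·x ≠ 1 and g(x) = (N−1)/N when a·x = 1. Then g is strictly monotonically increasing on the interval [0, ∞). -/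
open Finset

/-!
Since `1 - t^N = (1 - t)(1 + t + ⋯ + t^(N-1))`, the map is `g x = 1 - 1 / (1 + a x + ⋯ + (a x)^(N-1))`
on the whole line, the value `(N-1)/N` at `a x = 1` included. For `x ≥ 0` the geometric sum is
positive and, having the term `a x` because `N ≥ 2`, strictly increasing in `x`.
-/

theorem one_sub_div_one_sub_pow {K : Type*} [Field K] {t : K} (ht : t ≠ 1) (n : ℕ) :
    (1 - t) / (1 - t ^ n) = (∑ i ∈ range n, t ^ i)⁻¹ := by
  rw [← mul_neg_geom_sum, div_mul_cancel_left₀ (sub_ne_zero.2 ht.symm)]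

theorem geom_sum_strictMonoOn {R : Type*} [Semiring R] [PartialOrder R] [IsStrictOrderedRing R]
    {n : ℕ} (hn : 2 ≤ n) : StrictMonoOn (fun x : R ↦ ∑ i ∈ range n, x ^ i) (Set.Ici 0) := by
  intro x hx y _ hxy
  apply sum_lt_sum
  · exact fun i _ ↦ pow_le_pow_left₀ hx hxy.le i
  · exact ⟨1, mem_range.2 (by omega), by simpa using hxy⟩

/-- For a real `a > 0` and integer `N ≥ 2`, the map
`g(x) = 1 − (1 − a·x)/(1 − (a·x)^N)` for `a·x ≠ 1`, extended by `g(x) = (N−1)/N`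
at `a·x = 1`, is strictly monotonically increasing on `[0, ∞)`. -/
theorem stmt_2 (a : ℝ) (ha : 0 < a) (N : ℕ) (hN : 2 ≤ N) (g : ℝ → ℝ)
    (hg : ∀ x : ℝ, g x = if a * x = 1 then ((N : ℝ) - 1) / N
      else 1 - (1 - a * x) / (1 - (a * x) ^ N)) :
    StrictMonoOn g (Set.Ici (0 : ℝ)) := by
  have hg_geom : ∀ x, g x = 1 - (∑ i ∈ range N, (a * x) ^ i)⁻¹ := by
    intro x
    rw [hg]
    split_ifs with h
    · have hN0 : (N : ℝ) ≠ 0 := by positivity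
      simp only [h, one_pow, sum_const, card_range, nsmul_eq_mul, mul_one]
      field_simp
    · rw [one_sub_div_one_sub_pow h]
  intro x hx y hy hxy
  have hax : 0 ≤ a * x := mul_nonneg ha.le hx
  have hsum_pos : 0 < ∑ i ∈ range N, (a * x) ^ i := geom_sum_pos hax (by omega)
  have hsum_lt : ∑ i ∈ range N, (a * x) ^ i < ∑ i ∈ range N, (a * y) ^ i :=
    geom_sum_strictMonoOn hN hax (mul_nonneg ha.le hy) (mul_lt_mul_of_pos_left hxy ha)
  rw [hg_geom, hg_geom]
  linarith [inv_strictAntiOn hsum_pos (hsum_pos.trans hsum_lt) hsum_lt]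
end

section
/- Let a > 0 be a real number and N ≥ 2 an integer, and define g : ℝ → ℝ by g(x) = 1 − (1 − a·x)/(1 − (a·x)^N) when a·x ≠ 1 and g(x) = (N−1)/N when a·x = 1. Then g is strictly concave on the interval [0, ∞). -/
/-!
Writing `t = a·x` and `P(t) = ∑_{k<N} t^k`, the geometric sum formula gives `g(x) = 1 - 1/P(a·x)`
on `[0, ∞)`, so it suffices that `1/P` is strictly convex there, i.e. that `2 P'² > P P''` for
`t > 0`. With `A = ∑ t^k`, `B = ∑ k t^k = t P'` and `C = ∑ k(k-1) t^k = t² P''` one has the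
identity `2 B² - A C = N ∑_{i<N} (i+1)(N-1-i) t^(N+i)`: all coefficients of `t^m` with `m < N`
cancel, the surviving ones are nonnegative, and that of `t^N` is positive as soon as `N ≥ 2`.
-/

open Finset Set

theorem StrictConvexOn.comp_linearMap {𝕜 E F β : Type*} [Semiring 𝕜] [PartialOrder 𝕜]
    [AddCommMonoid E] [AddCommMonoid F] [AddCommMonoid β] [PartialOrder β] [Module 𝕜 E]
    [Module 𝕜 F] [SMul 𝕜 β] {f : F → β} {s : Set F} (hf : StrictConvexOn 𝕜 s f)
    (g : E →ₗ[𝕜] F) (hg : Function.Injective g) : StrictConvexOn 𝕜 (g ⁻¹' s) (f ∘ g) :=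
  ⟨hf.1.linear_preimage _, fun x hx y hy hxy a b ha hb hab =>
    calc
      f (g (a • x + b • y)) = f (a • g x + b • g y) := by rw [g.map_add, g.map_smul, g.map_smul]
      _ < a • f (g x) + b • f (g y) := hf.2 hx hy (hg.ne hxy) ha hb hab⟩

theorem strictConvexOn_of_hasDerivAt2_pos {D : Set ℝ} (hD : Convex ℝ D) {f f' f'' : ℝ → ℝ}
    (hf : ContinuousOn f D) (hf' : ∀ x ∈ interior D, HasDerivAt f (f' x) x)
    (hf'' : ∀ x ∈ interior D, HasDerivAt f' (f'' x) x) (hf''_pos : ∀ x ∈ interior D, 0 < f'' x) :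
    StrictConvexOn ℝ D f := by
  refine strictConvexOn_of_deriv2_pos hD hf fun x hx => ?_
  have hderiv : deriv f =ᶠ[nhds x] f' :=
    Filter.eventually_of_mem (isOpen_interior.mem_nhds hx) fun y hy => (hf' y hy).deriv
  rw [Function.iterate_succ_apply, Function.iterate_one, hderiv.deriv_eq, (hf'' x hx).deriv]
  exact hf''_pos x hx

theorem div_one_sub_pow_eq_inv_geom_sum {K : Type*} [Field K] {t : K} (ht : t ≠ 1) (N : ℕ) :
    (1 - t) / (1 - t ^ N) = (∑ k ∈ range N, t ^ k)⁻¹ := by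
  rw [geom_sum_eq ht, inv_div, ← neg_sub t, ← neg_sub (t ^ N), neg_div_neg_eq]

theorem sum_range_succ_mul_sub_mul_pow_add (N : ℕ) (t : ℝ) :
    ∑ i ∈ range (N + 1), ((i : ℝ) + 1) * (N - i) * t ^ (N + 1 + i)
      = ∑ i ∈ range N, (i : ℝ) * (N + 1 - i) * t ^ (N + i) + N * t ^ (2 * N) := by
  set φ : ℕ → ℝ := fun i => i * (N + 1 - i) * t ^ (N + i)
  have h := sum_range_succ' φ (N + 1)
  have hN : φ N = N * t ^ (2 * N) := by simp only [φ]; ring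
  rw [sum_range_succ, sum_range_succ, hN] at h
  simp only [φ, CharP.cast_eq_zero, zero_mul, Nat.cast_add, Nat.cast_one, sub_self, mul_zero,
    add_zero] at h
  rw [h]
  exact sum_congr rfl fun i _ => by ring_nf

theorem two_mul_sq_sum_mul_pow_sub (N : ℕ) (t : ℝ) :
    2 * (∑ k ∈ range N, (k : ℝ) * t ^ k) ^ 2
        - (∑ k ∈ range N, t ^ k) * ∑ k ∈ range N, (k : ℝ) * (k - 1) * t ^ k
      = N * ∑ i ∈ range N, ((i : ℝ) + 1) * (N - 1 - i) * t ^ (N + i) := by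
  induction N with
  | zero => simp
  | succ N ih =>
    -- passing from `N` to `N + 1` adds `t^N (4N B - N(N-1) A - C) + N(N+1) t^(2N)` to `2B² - AC`
    have hstep : N * ∑ i ∈ range N, ((i : ℝ) + 1) * (N - 1 - i) * t ^ (N + i)
        + t ^ N * (4 * N * ∑ k ∈ range N, (k : ℝ) * t ^ k
          - N * (N - 1) * ∑ k ∈ range N, t ^ k - ∑ k ∈ range N, (k : ℝ) * (k - 1) * t ^ k)
        = (N + 1) * ∑ i ∈ range N, (i : ℝ) * (N + 1 - i) * t ^ (N + i) := by
      simp only [mul_sum, ← sum_sub_distrib, ← sum_add_distrib]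
      refine sum_congr rfl fun i _ => ?_
      rw [pow_add]
      ring
    rw [sum_range_succ, sum_range_succ, sum_range_succ]
    push_cast
    rw [add_sub_cancel_right, sum_range_succ_mul_sub_mul_pow_add]
    linear_combination ih + hstep

theorem geom_sum_mul_lt_two_mul_sq {N : ℕ} (hN : 2 ≤ N) {t : ℝ} (ht : 0 < t) :
    (∑ k ∈ range N, t ^ k) * ∑ k ∈ range N, (k : ℝ) * (k - 1) * t ^ k
      < 2 * (∑ k ∈ range N, (k : ℝ) * t ^ k) ^ 2 := by
  rw [← sub_pos, two_mul_sq_sum_mul_pow_sub]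
  have hN' : (2 : ℝ) ≤ N := by exact_mod_cast hN
  refine mul_pos (by positivity) (sum_pos' (fun i hi => ?_) ⟨0, by simp; omega, ?_⟩)
  · have hi : (i : ℝ) + 1 ≤ N := by exact_mod_cast mem_range.1 hi
    exact mul_nonneg (mul_nonneg (by positivity) (by linarith)) (by positivity)
  · norm_num
    exact mul_pos (by linarith) (by positivity)

-- the truncated subtractions in the exponents only occur where the factor `k` or `k - 1` vanishes
theorem mul_cast_mul_pow_pred (k : ℕ) (t : ℝ) : t * (k * t ^ (k - 1)) = k * t ^ k := by
  rcases k with _ | k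
  · simp
  · rw [Nat.add_sub_cancel, pow_succ]; ring

theorem sq_mul_cast_mul_cast_mul_pow_pred_pred (k : ℕ) (t : ℝ) :
    t ^ 2 * (k * ((k - 1 : ℕ) * t ^ (k - 1 - 1))) = k * (k - 1) * t ^ k := by
  rcases k with _ | _ | k
  · simp
  · simp
  · simp only [Nat.add_sub_cancel, Nat.cast_add, Nat.cast_one]
    ring

theorem geom_sum_mul_deriv2_lt_two_mul_sq_deriv {N : ℕ} (hN : 2 ≤ N) {t : ℝ} (ht : 0 < t) :
    (∑ k ∈ range N, t ^ k) * ∑ k ∈ range N, (k : ℝ) * ((k - 1 : ℕ) * t ^ (k - 1 - 1))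
      < 2 * (∑ k ∈ range N, (k : ℝ) * t ^ (k - 1)) ^ 2 := by
  have h := geom_sum_mul_lt_two_mul_sq hN ht
  simp only [← mul_cast_mul_pow_pred, ← sq_mul_cast_mul_cast_mul_pow_pred_pred, ← mul_sum] at h
  refine lt_of_mul_lt_mul_left ?_ (sq_nonneg t)
  linear_combination h

theorem strictConvexOn_inv_geom_sum {N : ℕ} (hN : 2 ≤ N) :
    StrictConvexOn ℝ (Ici 0) fun t : ℝ => (∑ k ∈ range N, t ^ k)⁻¹ := by
  set P : ℝ → ℝ := fun t => ∑ k ∈ range N, t ^ k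
  set P' : ℝ → ℝ := fun t => ∑ k ∈ range N, (k : ℝ) * t ^ (k - 1)
  set P'' : ℝ → ℝ := fun t => ∑ k ∈ range N, (k : ℝ) * ((k - 1 : ℕ) * t ^ (k - 1 - 1))
  have hP : ∀ t, HasDerivAt P (P' t) t := fun t =>
    HasDerivAt.fun_sum fun k _ => hasDerivAt_pow k t
  have hP' : ∀ t, HasDerivAt P' (P'' t) t := fun t =>
    HasDerivAt.fun_sum fun k _ => (hasDerivAt_pow (k - 1) t).const_mul (k : ℝ)
  have hP_pos : ∀ t ∈ Ici (0 : ℝ), 0 < P t := fun t ht => geom_sum_pos ht (by omega)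
  refine strictConvexOn_of_hasDerivAt2_pos (convex_Ici 0) (f' := fun t => -P' t / P t ^ 2)
    (f'' := fun t => (2 * P' t ^ 2 - P t * P'' t) / P t ^ 3) ?_ ?_ ?_ ?_
  · exact fun t ht => ((hP t).continuousAt.inv₀ (hP_pos t ht).ne').continuousWithinAt
  · exact fun t ht => (hP t).inv (hP_pos t (interior_subset ht)).ne'
  · intro t ht
    have hPt := (hP_pos t (interior_subset ht)).ne'
    refine ((hP' t).fun_neg.fun_div ((hP t).fun_pow 2) (pow_ne_zero 2 hPt)).congr_deriv ?_
    field_simp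
    ring
  · intro t ht
    rw [interior_Ici] at ht
    exact div_pos (sub_pos.2 (geom_sum_mul_deriv2_lt_two_mul_sq_deriv hN ht))
      (pow_pos (hP_pos t (Ioi_subset_Ici_self ht)) 3)

/-- For a real `a > 0` and integer `N ≥ 2`, the map
`g(x) = 1 − (1 − a·x)/(1 − (a·x)^N)` for `a·x ≠ 1`, extended by `g(x) = (N−1)/N`
at `a·x = 1`, is strictly concave on `[0, ∞)`. -/
theorem stmt_3 (a : ℝ) (ha : 0 < a) (N : ℕ) (hN : 2 ≤ N) (g : ℝ → ℝ)
    (hg : ∀ x : ℝ, g x = if a * x = 1 then ((N : ℝ) - 1) / N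
      else 1 - (1 - a * x) / (1 - (a * x) ^ N)) :
    StrictConcaveOn ℝ (Set.Ici (0 : ℝ)) g := by
  have hg_eq : ∀ x, g x = 1 - (∑ k ∈ range N, (a * x) ^ k)⁻¹ := by
    intro x
    rw [hg]
    split_ifs with h
    · have hN0 : (N : ℝ) ≠ 0 := by positivity
      simp only [h, one_pow, sum_const, card_range, nsmul_eq_mul, mul_one]
      field_simp
    · rw [div_one_sub_pow_eq_inv_geom_sum h]
  have hscaled : StrictConvexOn ℝ (Ici 0) fun x => (∑ k ∈ range N, (a * x) ^ k)⁻¹ := by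
    have h : StrictConvexOn ℝ ((a * ·) ⁻¹' Ici 0) fun x => (∑ k ∈ range N, (a * x) ^ k)⁻¹ :=
      (strictConvexOn_inv_geom_sum hN).comp_linearMap (LinearMap.mulLeft ℝ a)
        (mul_right_injective₀ ha.ne')
    rwa [preimage_const_mul_Ici₀ _ ha, zero_div] at h
  exact ((concaveOn_const 1 (convex_Ici 0)).sub_strictConvexOn hscaled).congr
    fun x _ => (hg_eq x).symm
end

section
/- Let a > 0 be a real number and N ≥ 2 an integer. Then, as x tends to 1/a within the punctured set {x : a·x ≠ 1}: (i) the first derivative expression a·((N−1)(a·x)^N + 1 − N·(a·x)^(N−1)) / (1 − (a·x)^N)² tends to a·(N−1)/(2N); and (ii) the second derivative expression −a²·N·(a·x)^(N−2)·((1 − a·x)/(1 − (a·x)^N)³)·((N−1)(1 − (a·x)^(N+1))/(1 − a·x) − (a·x)(N+1)(1 − (a·x)^(N−1))/(1 − a·x)) tends to −a²·(N²−1)/(6N). -/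
/-!
Put `t = a x`. Both expressions are rational functions of `t` whose numerator and denominator
vanish at `t = 1` to the same order, and the common factor is a power of `1 - t`:
`1 - t^N = (1 - t) ∑_{k<N} t^k`,
`(N-1) t^N + 1 - N t^(N-1) = (1 - t)^2 ∑_{k<N-1} (k+1) t^k` and
`(N-1)(1 - t^(N+1)) - t (N+1)(1 - t^(N-1)) = (1 - t)^3 ∑_{k<N-1} (k+1)(N-1-k) t^k`.
After cancelling, the expressions are continuous at `t = 1`, and their values there come from
`∑_{k<m} (k+1) = m(m+1)/2` and `∑_{k<m} (k+1)(m-k) = m(m+1)(m+2)/6`.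
-/

open Finset Filter Topology

section SumIdentities

variable (t : ℝ)

theorem one_sub_sq_mul_sum_range_succ_mul_pow (n : ℕ) :
    (1 - t) ^ 2 * ∑ k ∈ range n, ((k : ℝ) + 1) * t ^ k = n * t ^ (n + 1) + 1 - (n + 1) * t ^ n := by
  induction n with
  | zero => simp
  | succ m ih =>
    rw [sum_range_succ]
    push_cast
    linear_combination ih

theorem sum_range_succ_mul_sub_mul_pow_succ (n : ℕ) :
    ∑ k ∈ range (n + 1), ((k : ℝ) + 1) * ((n + 1 : ℝ) - k) * t ^ k =
      ∑ k ∈ range n, ((k : ℝ) + 1) * ((n : ℝ) - k) * t ^ k +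
        ∑ k ∈ range (n + 1), ((k : ℝ) + 1) * t ^ k := by
  have h : ∑ k ∈ range n, ((k : ℝ) + 1) * ((n + 1 : ℝ) - k) * t ^ k =
      ∑ k ∈ range n, ((k : ℝ) + 1) * ((n : ℝ) - k) * t ^ k +
        ∑ k ∈ range n, ((k : ℝ) + 1) * t ^ k := by
    rw [← sum_add_distrib]
    exact sum_congr rfl fun k _ => by ring
  rw [sum_range_succ, sum_range_succ, h]
  ring

theorem one_sub_pow_three_mul_sum_range_succ_mul_sub_mul_pow (n : ℕ) :
    (1 - t) ^ 3 * ∑ k ∈ range n, ((k : ℝ) + 1) * ((n : ℝ) - k) * t ^ k =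
      n * (1 - t ^ (n + 2)) - t * (n + 2) * (1 - t ^ n) := by
  induction n with
  | zero => simp
  | succ m ih =>
    have h := one_sub_sq_mul_sum_range_succ_mul_pow t (m + 1)
    push_cast at h ⊢
    rw [sum_range_succ_mul_sub_mul_pow_succ]
    linear_combination ih + (1 - t) * h

end SumIdentities

theorem sum_range_cast_add_one (m : ℕ) : ∑ k ∈ range m, ((k : ℝ) + 1) = m * (m + 1) / 2 := by
  induction m with
  | zero => simp
  | succ p ih =>
    rw [sum_range_succ, ih]
    push_cast
    ring

theorem sum_range_cast_add_one_mul_sub (m : ℕ) :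
    ∑ k ∈ range m, ((k : ℝ) + 1) * ((m : ℝ) - k) = m * (m + 1) * (m + 2) / 6 := by
  induction m with
  | zero => simp
  | succ p ih =>
    have h := sum_range_succ_mul_sub_mul_pow_succ 1 p
    simp only [one_pow, mul_one] at h
    push_cast
    rw [h, ih, sum_range_cast_add_one]
    push_cast
    ring

theorem tendsto_nhdsNE_of_forall_ne_eq {f g : ℝ → ℝ} {x : ℝ} (hfg : ∀ t ≠ x, f t = g t)
    (hg : ContinuousAt g x) : Tendsto f (𝓝[≠] x) (𝓝 (g x)) :=
  (hg.tendsto.mono_left nhdsWithin_le_nhds).congr' <|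
    eventually_nhdsWithin_of_forall fun t ht => (hfg t ht).symm

theorem tendsto_const_mul_nhdsWithin_setOf_mul_ne_one {a : ℝ} (ha : a ≠ 0) :
    Tendsto (a * ·) (𝓝[{x | a * x ≠ 1}] (1 / a)) (𝓝[≠] 1) := by
  refine tendsto_nhdsWithin_of_tendsto_nhds_of_eventually_within _ ?_ ?_
  · have h : Tendsto (a * ·) (𝓝 (1 / a)) (𝓝 (a * (1 / a))) := (continuous_const_mul a).tendsto _
    rw [mul_one_div_cancel ha] at h
    exact h.mono_left nhdsWithin_le_nhds
  · exact eventually_nhdsWithin_of_forall fun x hx => hx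

noncomputable def firstDerivExpr (a : ℝ) (N : ℕ) (t : ℝ) : ℝ :=
  a * (((N : ℝ) - 1) * t ^ N + 1 - (N : ℝ) * t ^ (N - 1)) / (1 - t ^ N) ^ 2

noncomputable def secondDerivExpr (a : ℝ) (N : ℕ) (t : ℝ) : ℝ :=
  -a ^ 2 * (N : ℝ) * t ^ (N - 2) * ((1 - t) / (1 - t ^ N) ^ 3)
    * (((N : ℝ) - 1) * (1 - t ^ (N + 1)) / (1 - t) - t * ((N : ℝ) + 1) * (1 - t ^ (N - 1)) / (1 - t))

theorem firstDerivExpr_eq_of_ne_one (a : ℝ) (n : ℕ) {t : ℝ} (ht : t ≠ 1) :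
    firstDerivExpr a (n + 1) t =
      a * (∑ k ∈ range n, ((k : ℝ) + 1) * t ^ k) / (∑ k ∈ range (n + 1), t ^ k) ^ 2 := by
  have h1t : (1 - t) ^ 2 ≠ 0 := pow_ne_zero 2 (sub_ne_zero.2 ht.symm)
  unfold firstDerivExpr
  push_cast
  rw [add_sub_cancel_right, ← mul_neg_geom_sum, mul_pow,
    ← one_sub_sq_mul_sum_range_succ_mul_pow, mul_left_comm, mul_div_mul_left _ _ h1t]

theorem secondDerivExpr_eq_of_ne_one (a : ℝ) (n : ℕ) {t : ℝ} (ht : t ≠ 1) :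
    secondDerivExpr a (n + 1) t =
      -a ^ 2 * (n + 1 : ℝ) * t ^ (n + 1 - 2)
        * (∑ k ∈ range n, ((k : ℝ) + 1) * ((n : ℝ) - k) * t ^ k)
        / (∑ k ∈ range (n + 1), t ^ k) ^ 3 := by
  have h1t : 1 - t ≠ 0 := sub_ne_zero.2 ht.symm
  unfold secondDerivExpr
  rw [div_sub_div_same, Nat.add_sub_cancel, ← mul_neg_geom_sum t (n + 1)]
  push_cast
  rw [add_sub_cancel_right, show (n : ℝ) + 1 + 1 = n + 2 by ring, show n + 1 + 1 = n + 2 by ring,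
    ← one_sub_pow_three_mul_sum_range_succ_mul_sub_mul_pow]
  field_simp

theorem tendsto_firstDerivExpr (a : ℝ) {N : ℕ} (hN : 1 ≤ N) :
    Tendsto (firstDerivExpr a N) (𝓝[≠] 1) (𝓝 (a * ((N : ℝ) - 1) / (2 * N))) := by
  obtain ⟨n, rfl⟩ : ∃ n, N = n + 1 := ⟨N - 1, by omega⟩
  have hg : ContinuousAt (fun t : ℝ =>
      a * (∑ k ∈ range n, ((k : ℝ) + 1) * t ^ k) / (∑ k ∈ range (n + 1), t ^ k) ^ 2) 1 :=
    (by fun_prop : Continuous _).continuousAt.div (by fun_prop) (by rw [one_geom_sum]; positivity)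
  convert tendsto_nhdsNE_of_forall_ne_eq (fun t => firstDerivExpr_eq_of_ne_one a n) hg using 2
  rw [one_geom_sum]
  simp only [one_pow, mul_one, sum_range_cast_add_one]
  push_cast
  field_simp
  ring

theorem tendsto_secondDerivExpr (a : ℝ) {N : ℕ} (hN : 1 ≤ N) :
    Tendsto (secondDerivExpr a N) (𝓝[≠] 1) (𝓝 (-a ^ 2 * ((N : ℝ) ^ 2 - 1) / (6 * N))) := by
  obtain ⟨n, rfl⟩ : ∃ n, N = n + 1 := ⟨N - 1, by omega⟩
  have hg : ContinuousAt (fun t : ℝ => -a ^ 2 * (n + 1 : ℝ) * t ^ (n + 1 - 2)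
      * (∑ k ∈ range n, ((k : ℝ) + 1) * ((n : ℝ) - k) * t ^ k)
      / (∑ k ∈ range (n + 1), t ^ k) ^ 3) 1 :=
    (by fun_prop : Continuous _).continuousAt.div (by fun_prop) (by rw [one_geom_sum]; positivity)
  convert tendsto_nhdsNE_of_forall_ne_eq (fun t => secondDerivExpr_eq_of_ne_one a n) hg using 2
  rw [one_geom_sum]
  simp only [one_pow, mul_one, sum_range_cast_add_one_mul_sub]
  push_cast
  field_simp
  ring

/-- For a real `a > 0` and integer `N ≥ 2`, as `x → 1/a` within `{x : a·x ≠ 1}`: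
(i) the first-derivative expression
`a·((N−1)(a·x)^N + 1 − N·(a·x)^(N−1)) / (1 − (a·x)^N)²` tends to `a·(N−1)/(2N)`, and
(ii) the second-derivative expression
`−a²·N·(a·x)^(N−2)·((1 − a·x)/(1 − (a·x)^N)³)·((N−1)(1 − (a·x)^(N+1))/(1 − a·x) −
(a·x)(N+1)(1 − (a·x)^(N−1))/(1 − a·x))` tends to `−a²·(N²−1)/(6N)`. -/
theorem stmt_5 (a : ℝ) (ha : 0 < a) (N : ℕ) (hN : 2 ≤ N) :
    Filter.Tendsto
      (fun x : ℝ => a * (((N : ℝ) - 1) * (a * x) ^ N + 1 - (N : ℝ) * (a * x) ^ (N - 1))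
        / (1 - (a * x) ^ N) ^ 2)
      (nhdsWithin (1 / a) {x : ℝ | a * x ≠ 1}) (nhds (a * ((N : ℝ) - 1) / (2 * N)))
    ∧
    Filter.Tendsto
      (fun x : ℝ => -a ^ 2 * (N : ℝ) * (a * x) ^ (N - 2)
        * ((1 - a * x) / (1 - (a * x) ^ N) ^ 3)
        * (((N : ℝ) - 1) * (1 - (a * x) ^ (N + 1)) / (1 - a * x)
          - (a * x) * ((N : ℝ) + 1) * (1 - (a * x) ^ (N - 1)) / (1 - a * x)))
      (nhdsWithin (1 / a) {x : ℝ | a * x ≠ 1})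
      (nhds (-a ^ 2 * ((N : ℝ) ^ 2 - 1) / (6 * N))) := by
  have hax := tendsto_const_mul_nhdsWithin_setOf_mul_ne_one ha.ne'
  exact ⟨(tendsto_firstDerivExpr a (by omega)).comp hax,
    (tendsto_secondDerivExpr a (by omega)).comp hax⟩
end

section
/- Let K ≥ 1 and let a ∈ ℝ^K have strictly positive entries a_k > 0, let b ≥ 0 be a real number, and let N ≥ 2 be an integer. Define G : ℝ^K → ℝ by G(x) = 1 − (1 − b − ⟨a,x⟩)/(1 − (b + ⟨a,x⟩)^N) when b + ⟨a,x⟩ ≠ 1, and G(x) = (N−1)/N when b + ⟨a,x⟩ = 1, where ⟨a,x⟩ = Σ_k a_k·x_k. Then on the nonnegative orthant {x ∈ ℝ^K : x_k ≥ 0 for all k}, G is strictly increasing in each coordinate (if x ≤ y coordinatewise and x_k < y_k for some k, then G(x) < G(y)) and G is concave. -/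
/-!
With `t = b + ⟨a, x⟩ ≥ 0` and `S t = ∑_{i<N} tⁱ`, the factorisation `1 - t^N = (1 - t) S t` gives
`G x = 1 - 1 / S t`, also at `t = 1`. Since `t` is affine in `x` with positive coefficients, it
suffices that `1 / S` is strictly decreasing and convex on `[0, ∞)`. Its slope over `[c, u]` is
`-D(c, u) / (S c * S u)` with `D(c, u) = (S u - S c) / (u - c)`, so convexity reduces to
`u ↦ D(c, u) / S u` being antitone. Now `D(c, u)` is a combination with coefficients `cᵖ ≥ 0` of
the partial sums `S_k u` with `k < N`, and each `S_k u / S_N u` is antitone by the rearrangement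
inequality `v^q u^r ≤ u^q v^r` (`q ≤ r`, `0 ≤ u ≤ v`).
-/

open Finset Set

lemma pow_mul_pow_le_pow_mul_pow_of_le {u v : ℝ} (hu : 0 ≤ u) (huv : u ≤ v) {q r : ℕ}
    (hqr : q ≤ r) : v ^ q * u ^ r ≤ u ^ q * v ^ r := by
  obtain ⟨d, rfl⟩ := Nat.exists_eq_add_of_le hqr
  have hv := hu.trans huv
  calc v ^ q * u ^ (q + d) = u ^ q * v ^ q * u ^ d := by ring
    _ ≤ u ^ q * v ^ q * v ^ d := by gcongr
    _ = u ^ q * v ^ (q + d) := by ring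

lemma geom_sum_mul_geom_sum_le {u v : ℝ} (hu : 0 ≤ u) (huv : u ≤ v) {k n : ℕ} (hkn : k ≤ n) :
    (∑ i ∈ range k, v ^ i) * ∑ i ∈ range n, u ^ i ≤
      (∑ i ∈ range k, u ^ i) * ∑ i ∈ range n, v ^ i := by
  induction n, hkn using Nat.le_induction with
  | base => exact (mul_comm _ _).le
  | succ n hkn ih =>
    have hlast : (∑ i ∈ range k, v ^ i) * u ^ n ≤ (∑ i ∈ range k, u ^ i) * v ^ n := by
      simp only [sum_mul]
      exact sum_le_sum fun q hq =>
        pow_mul_pow_le_pow_mul_pow_of_le hu huv ((mem_range.1 hq).le.trans hkn)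
    rw [sum_range_succ, sum_range_succ, mul_add, mul_add]
    exact add_le_add ih hlast

lemma antitoneOn_geom_sum_div_geom_sum {k n : ℕ} (hkn : k ≤ n) :
    AntitoneOn (fun u : ℝ => (∑ i ∈ range k, u ^ i) / ∑ i ∈ range n, u ^ i) (Ici 0) := by
  intro u hu v _ huv
  rcases Nat.eq_zero_or_pos n with rfl | hn
  · simp
  rw [div_le_div_iff₀ (geom_sum_pos (hu.trans huv) hn.ne') (geom_sum_pos hu hn.ne')]
  exact geom_sum_mul_geom_sum_le hu huv hkn

-- `geomSumDslope n c u = (S u - S c) / (u - c)` for `S t = ∑ i ∈ range n, t ^ i`, written as a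
-- polynomial so that it also makes sense at `u = c`.
noncomputable def geomSumDslope : ℕ → ℝ → ℝ → ℝ
  | 0, _, _ => 0
  | n + 1, c, u => c * geomSumDslope n c u + ∑ i ∈ range n, u ^ i

lemma geom_sum_sub_geom_sum (n : ℕ) (c u : ℝ) :
    ∑ i ∈ range n, u ^ i - ∑ i ∈ range n, c ^ i = (u - c) * geomSumDslope n c u := by
  induction n with
  | zero => simp [geomSumDslope]
  | succ n ih =>
    rw [geom_sum_succ, geom_sum_succ, geomSumDslope]
    linear_combination c * ih

lemma antitoneOn_geomSumDslope_div_geom_sum {c : ℝ} (hc : 0 ≤ c) {k n : ℕ} (hkn : k ≤ n) :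
    AntitoneOn (fun u => geomSumDslope k c u / ∑ i ∈ range n, u ^ i) (Ici 0) := by
  induction k with
  | zero => simp [geomSumDslope, antitoneOn_const]
  | succ k ih =>
    simp only [geomSumDslope, add_div, mul_div_assoc]
    exact fun u hu v hv huv => add_le_add
      (mul_le_mul_of_nonneg_left (ih (by omega) hu hv huv) hc)
      (antitoneOn_geom_sum_div_geom_sum (by omega) hu hv huv)

lemma inv_geom_sum_slope {n : ℕ} {c u : ℝ} (hc : 0 ≤ c) (hu : 0 ≤ u) (hn : n ≠ 0)
    (huc : u ≠ c) :
    ((∑ i ∈ range n, u ^ i)⁻¹ - (∑ i ∈ range n, c ^ i)⁻¹) / (u - c) =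
      -(geomSumDslope n c u / (∑ i ∈ range n, u ^ i) / ∑ i ∈ range n, c ^ i) := by
  have hSc := (geom_sum_pos hc hn).ne'
  have hSu := (geom_sum_pos hu hn).ne'
  rw [inv_sub_inv hSu hSc, ← neg_sub, geom_sum_sub_geom_sum]
  field_simp [sub_ne_zero.2 huc]

lemma convexOn_inv_geom_sum (n : ℕ) :
    ConvexOn ℝ (Ici 0) fun t : ℝ => (∑ i ∈ range n, t ^ i)⁻¹ := by
  rcases eq_or_ne n 0 with rfl | hn
  · simpa using convexOn_const (0 : ℝ) (convex_Ici (0 : ℝ))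
  refine convexOn_of_slope_mono_adjacent (convex_Ici 0) fun {x y z} hx hz hxy hyz => ?_
  have hy : (0 : ℝ) ≤ y := hx.out.trans hxy.le
  rw [← neg_div_neg_eq, neg_sub, neg_sub, inv_geom_sum_slope hy hx hn hxy.ne,
    inv_geom_sum_slope hy hz hn hyz.ne', neg_le_neg_iff]
  exact div_le_div_of_nonneg_right
    (antitoneOn_geomSumDslope_div_geom_sum hy le_rfl hx hz (hxy.trans hyz).le)
    (geom_sum_pos hy hn).le

lemma strictMonoOn_geom_sum {n : ℕ} (hn : 2 ≤ n) :
    StrictMonoOn (fun t : ℝ => ∑ i ∈ range n, t ^ i) (Ici 0) := fun s hs t _ hst =>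
  sum_lt_sum (fun i _ => pow_le_pow_left₀ hs hst.le i)
    ⟨1, mem_range.2 (by omega), by simpa using hst⟩

lemma strictMonoOn_one_sub_inv_geom_sum {n : ℕ} (hn : 2 ≤ n) :
    StrictMonoOn (fun t : ℝ => 1 - (∑ i ∈ range n, t ^ i)⁻¹) (Ici 0) := fun s hs t ht hst =>
  sub_lt_sub_left
    (inv_strictAnti₀ (geom_sum_pos hs (by omega)) (strictMonoOn_geom_sum hn hs ht hst)) 1

lemma ite_eq_one_sub_inv_geom_sum {n : ℕ} (hn : n ≠ 0) (t : ℝ) :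
    (if t = 1 then ((n : ℝ) - 1) / n else 1 - (1 - t) / (1 - t ^ n)) =
      1 - (∑ i ∈ range n, t ^ i)⁻¹ := by
  split_ifs with ht
  · subst ht
    have hn' : (n : ℝ) ≠ 0 := Nat.cast_ne_zero.2 hn
    simp only [one_pow, sum_const, card_range, nsmul_eq_mul, mul_one]
    field_simp
  · rw [← mul_neg_geom_sum, div_mul_cancel_left₀ (sub_ne_zero.2 (Ne.symm ht))]

open Finset in
theorem stmt_6_general (K : ℕ) (a : Fin K → ℝ) (ha : ∀ k, 0 < a k)
    (b : ℝ) (hb : 0 ≤ b) (N : ℕ) (hN : 2 ≤ N) (G : (Fin K → ℝ) → ℝ)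
    (hG : ∀ x : Fin K → ℝ,
      G x = if b + ∑ k, a k * x k = 1 then ((N : ℝ) - 1) / N
        else 1 - (1 - b - ∑ k, a k * x k) / (1 - (b + ∑ k, a k * x k) ^ N)) :
    (∀ x y : Fin K → ℝ, (∀ k, 0 ≤ x k) → (∀ k, 0 ≤ y k) →
      (∀ k, x k ≤ y k) → (∃ k, x k < y k) → G x < G y)
    ∧ ConcaveOn ℝ {x : Fin K → ℝ | ∀ k, 0 ≤ x k} G := by
  let ℓ : (Fin K → ℝ) →ᵃ[ℝ] ℝ :=
    (∑ k, a k • LinearMap.proj (R := ℝ) (φ := fun _ : Fin K => ℝ) k).toAffineMap +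
      AffineMap.const ℝ _ b
  have hℓ : ∀ x, ℓ x = b + ∑ k, a k * x k := fun x => by simp [ℓ, add_comm]
  have hGℓ : G = fun x => 1 - (∑ i ∈ range N, ℓ x ^ i)⁻¹ := funext fun x => by
    rw [hG, sub_sub, ite_eq_one_sub_inv_geom_sum (by omega), hℓ]
  have hℓ_nonneg : ∀ x : Fin K → ℝ, (∀ k, 0 ≤ x k) → 0 ≤ ℓ x := fun x hx => by
    rw [hℓ]
    exact add_nonneg hb (sum_nonneg fun k _ => mul_nonneg (ha k).le (hx k))
  subst hGℓ
  refine ⟨fun x y hx hy hxy ⟨k, hk⟩ => ?_, ?_⟩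
  · have hlt : ℓ x < ℓ y := by
      rw [hℓ, hℓ]
      exact (add_lt_add_iff_left b).2 <| sum_lt_sum
        (fun k _ => mul_le_mul_of_nonneg_left (hxy k) (ha k).le)
        ⟨k, mem_univ k, mul_lt_mul_of_pos_left hk (ha k)⟩
    exact strictMonoOn_one_sub_inv_geom_sum hN (hℓ_nonneg x hx) (hℓ_nonneg y hy) hlt
  · exact (((concaveOn_const 1 (convex_Ici 0)).sub (convexOn_inv_geom_sum N)).comp_affineMap
      ℓ).subset hℓ_nonneg (convex_Ici 0)

open Finset in
/-- Lemma 2 (Properties): with positive coefficients `a_k`, a constant `b ≥ 0` and an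
integer `N ≥ 2`, the map `G(x) = 1 − (1 − b − ⟨a,x⟩)/(1 − (b + ⟨a,x⟩)^N)` (extended by
`(N−1)/N` where `b + ⟨a,x⟩ = 1`) is, on the nonnegative orthant, strictly increasing in
each coordinate and concave. -/
theorem stmt_6 (K : ℕ) (hK : 1 ≤ K) (a : Fin K → ℝ) (ha : ∀ k, 0 < a k)
    (b : ℝ) (hb : 0 ≤ b) (N : ℕ) (hN : 2 ≤ N) (G : (Fin K → ℝ) → ℝ)
    (hG : ∀ x : Fin K → ℝ,
      G x = if b + ∑ k, a k * x k = 1 then ((N : ℝ) - 1) / N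
        else 1 - (1 - b - ∑ k, a k * x k) / (1 - (b + ∑ k, a k * x k) ^ N)) :
    (∀ x y : Fin K → ℝ, (∀ k, 0 ≤ x k) → (∀ k, 0 ≤ y k) →
      (∀ k, x k ≤ y k) → (∃ k, x k < y k) → G x < G y)
    ∧ ConcaveOn ℝ {x : Fin K → ℝ | ∀ k, 0 ≤ x k} G :=
  stmt_6_general K a ha b hb N hN G hG
end

section
/- Let n ≥ 1 and let Ξ : ℝⁿ → ℝⁿ be a function that is increasing with respect to the coordinatewise partial order (x ≤ y coordinatewise implies Ξ(x) ≤ Ξ(y) coordinatewise) and each of whose coordinate functions is strictly concave on ℝⁿ. Suppose that Ξ(0) ≥ 0 coordinatewise, that there exists a ∈ ℝⁿ with all coordinates positive such that Ξ(a) > a strictly in every coordinate, and that there exists b ∈ ℝⁿ with b > a in every coordinate such that Ξ(b) < b strictly in every coordinate. Then Ξ has a unique fixed point with all coordinates strictly positive. -/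
/-!
Existence is Tarski's argument: the supremum of `{z ≤ b | z ≤ Ξ z}` is a fixed point, and it
lies above `a > 0`. For uniqueness, let `u, v` be positive fixed points with `v ≰ u` and let
`t < 1` be the largest scalar with `t • v ≤ u`, attained in coordinate `i`. Strict concavity
on the segment from `0` to `v`, together with `Ξ 0 ≥ 0`, gives `t * v i < Ξ (t • v) i`, while
monotonicity gives `Ξ (t • v) i ≤ Ξ u i = u i = t * v i`.
-/

open Set

theorem Monotone.exists_isFixedPt_mem_Icc {α : Type*} [ConditionallyCompleteLattice α]
    {f : α → α} (hf : Monotone f) {a b : α} (hab : a ≤ b) (ha : a ≤ f a) (hb : f b ≤ b) :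
    ∃ x ∈ Icc a b, f x = x := by
  set S := {z | z ≤ b ∧ z ≤ f z}
  have haS : a ∈ S := ⟨hab, ha⟩
  have hS : BddAbove S := ⟨b, fun z hz => hz.1⟩
  have hxb : sSup S ≤ b := csSup_le ⟨a, haS⟩ fun z hz => hz.1
  have hxf : sSup S ≤ f (sSup S) :=
    csSup_le ⟨a, haS⟩ fun z hz => hz.2.trans (hf (le_csSup hS hz))
  have hfxS : f (sSup S) ∈ S := ⟨(hf hxb).trans hb, hf hxf⟩
  exact ⟨sSup S, ⟨le_csSup hS haS, hxb⟩, le_antisymm (le_csSup hS hfxS) hxf⟩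

section StrictConcave

variable {𝕜 ι : Type*} [Field 𝕜] [LinearOrder 𝕜] [IsStrictOrderedRing 𝕜]
  {F : (ι → 𝕜) → ι → 𝕜}

theorem mul_lt_apply_smul_of_strictConcaveOn
    (hconc : ∀ i, StrictConcaveOn 𝕜 univ fun x => F x i) (h0 : 0 ≤ F 0)
    {v : ι → 𝕜} (hv : v ≠ 0) (hfv : F v = v) {t : 𝕜} (ht0 : 0 < t) (ht1 : t < 1) (i : ι) :
    t * v i < F (t • v) i := by
  have hseg : t * F v i + (1 - t) * F 0 i < F (t • v) i := by
    simpa only [smul_zero, add_zero, smul_eq_mul] using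
      (hconc i).2 (mem_univ v) (mem_univ 0) hv ht0 (sub_pos.2 ht1) (by ring)
  rw [hfv] at hseg
  have : 0 ≤ (1 - t) * F 0 i := mul_nonneg (sub_pos.2 ht1).le (h0 i)
  linarith

theorem le_of_isFixedPt_of_strictConcaveOn [Finite ι] (hmono : Monotone F)
    (hconc : ∀ i, StrictConcaveOn 𝕜 univ fun x => F x i) (h0 : 0 ≤ F 0)
    {u v : ι → 𝕜} (hu : ∀ i, 0 < u i) (hv : ∀ i, 0 < v i) (hfu : F u = u) (hfv : F v = v) :
    v ≤ u := by
  by_contra hvu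
  obtain ⟨j, hj⟩ : ∃ j, u j < v j := by simpa [Pi.le_def] using hvu
  have : Nonempty ι := ⟨j⟩
  obtain ⟨i, hi⟩ := Finite.exists_min fun k => u k / v k
  set t := u i / v i
  have ht0 : 0 < t := div_pos (hu i) (hv i)
  have ht1 : t < 1 := (hi j).trans_lt ((div_lt_one (hv j)).2 hj)
  have htv : t • v ≤ u := fun k => (le_div_iff₀ (hv k)).1 (hi k)
  have hv0 : v ≠ 0 := fun h => (hv j).ne' (congrFun h j)
  have hlt := mul_lt_apply_smul_of_strictConcaveOn hconc h0 hv0 hfv ht0 ht1 i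
  have hle : F (t • v) i ≤ u i := hfu ▸ hmono htv i
  rw [div_mul_cancel₀ _ (hv i).ne'] at hlt
  exact hlt.not_ge hle

end StrictConcave

theorem stmt_8_general (n : ℕ) (Xi : (Fin n → ℝ) → Fin n → ℝ)
    (hmono : Monotone Xi)
    (hconc : ∀ i, StrictConcaveOn ℝ (Set.univ : Set (Fin n → ℝ)) (fun x => Xi x i))
    (h0 : ∀ i, 0 ≤ Xi 0 i)
    (a : Fin n → ℝ) (ha : ∀ i, 0 < a i) (hXa : ∀ i, a i < Xi a i)
    (b : Fin n → ℝ) (hab : ∀ i, a i < b i) (hXb : ∀ i, Xi b i < b i) :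
    ∃! x : Fin n → ℝ, (∀ i, 0 < x i) ∧ Xi x = x := by
  obtain ⟨x, ⟨hax, -⟩, hfx⟩ := hmono.exists_isFixedPt_mem_Icc
    (fun i => (hab i).le) (fun i => (hXa i).le) (fun i => (hXb i).le)
  have hx : ∀ i, 0 < x i := fun i => (ha i).trans_le (hax i)
  refine ⟨x, ⟨hx, hfx⟩, fun y ⟨hy, hfy⟩ => le_antisymm ?_ ?_⟩
  · exact le_of_isFixedPt_of_strictConcaveOn hmono hconc h0 hx hy hfx hfy
  · exact le_of_isFixedPt_of_strictConcaveOn hmono hconc h0 hy hx hfy hfx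

/-- Theorem 1 (fixed point for increasing concave functions): if `Ξ : ℝⁿ → ℝⁿ` is
increasing for the coordinatewise order, each coordinate function is strictly concave,
`Ξ(0) ≥ 0`, `Ξ(a) > a` (strictly in every coordinate) for some strictly positive `a`,
and `Ξ(b) < b` for some `b > a` (coordinatewise strict), then `Ξ` has a unique fixed
point with all coordinates strictly positive. -/
theorem stmt_8 (n : ℕ) (hn : 1 ≤ n) (Xi : (Fin n → ℝ) → Fin n → ℝ)
    (hmono : Monotone Xi)
    (hconc : ∀ i, StrictConcaveOn ℝ (Set.univ : Set (Fin n → ℝ)) (fun x => Xi x i))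
    (h0 : ∀ i, 0 ≤ Xi 0 i)
    (a : Fin n → ℝ) (ha : ∀ i, 0 < a i) (hXa : ∀ i, a i < Xi a i)
    (b : Fin n → ℝ) (hab : ∀ i, a i < b i) (hXb : ∀ i, Xi b i < b i) :
    ∃! x : Fin n → ℝ, (∀ i, 0 < x i) ∧ Xi x = x :=
  stmt_8_general n Xi hmono hconc h0 a ha hXa b hab hXb
end

section
/- Let K ≥ 1, let λ_k, μ_k, w_k (for k = 1,…,K) and P_c, λ_u be strictly positive real numbers, and let N_k ≥ 1 be integers. For ρ ∈ ℝ^K define s_k(ρ) = (μ_k / (P_c λ_u w_k)) · Σ_{j=1}^K ρ_j λ_j w_j and g_k(ρ) = 1 − (1 − s_k(ρ))/(1 − s_k(ρ)^(N_k+1)) when s_k(ρ) ≠ 1, with g_k(ρ) = N_k/(N_k+1) when s_k(ρ) = 1. Then the system of fixed point equations ρ_k = g_k(ρ), k = 1,…,K, has a solution with ρ_k > 0 for all k if and only if Σ_{k=1}^K λ_k μ_k > λ_u · P_c; moreover, when this condition holds, the positive solution is unique. -/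
/-!
Write `B_n(x) = ∑_{i<n} x^i`. Off `x = 1`, `1 - (1 - x)/(1 - x^(N+1)) = 1 - 1/B_{N+1}(x)
= x ψ_N(x)` with `ψ_N = B_N / B_{N+1}`, and the same holds at `x = 1`, so the system reads
`ρ_k = c_k T ψ_{N_k}(c_k T)` with `c_k = μ_k / (P_c λ_u w_k)` and the load `T = ∑_j ρ_j λ_j w_j`.
Multiplying by `λ_k w_k` and summing, positive solutions correspond exactly to positive roots of
`F(T) = ∑_k c_k λ_k w_k ψ_{N_k}(c_k T) = 1`, and `T` determines `ρ`.
Each `ψ_N` is continuous and strictly decreasing on `[0, ∞)` with `ψ_N(0) = 1` and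
`x ψ_N(x) < 1`. Hence `F` decreases strictly from `F(0) = ∑_k λ_k μ_k / (λ_u P_c)` to a value
below `1` at `T = ∑_k λ_k w_k`, so `F = 1` has a positive root iff `F(0) > 1`, and at most one.
-/

open Finset Set

noncomputable def geomRatio (N : ℕ) (x : ℝ) : ℝ :=
  (∑ i ∈ range N, x ^ i) / ∑ i ∈ range (N + 1), x ^ i

section geomRatio

variable {N : ℕ} {x : ℝ}

lemma geomRatio_zero (hN : 1 ≤ N) : geomRatio N 0 = 1 := by
  simp [geomRatio, zero_geom_sum, Nat.one_le_iff_ne_zero.mp hN]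

lemma geomRatio_pos (hN : 1 ≤ N) (hx : 0 ≤ x) : 0 < geomRatio N x :=
  div_pos (geom_sum_pos hx (by omega)) (geom_sum_pos hx (by omega))

lemma mul_geomRatio_lt_one (hx : 0 ≤ x) : x * geomRatio N x < 1 := by
  rw [geomRatio, ← mul_div_assoc, div_lt_one (geom_sum_pos hx (by omega)), geom_sum_succ]
  exact lt_add_one _

lemma continuousOn_geomRatio (N : ℕ) : ContinuousOn (geomRatio N) (Ici 0) :=
  ContinuousOn.div (by fun_prop) (by fun_prop) fun _ hx => (geom_sum_pos hx (by omega)).ne'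

lemma pow_mul_pow_le_pow_mul_pow {x y : ℝ} (hx : 0 ≤ x) (hxy : x ≤ y) {i : ℕ} (hi : i ≤ N) :
    y ^ i * x ^ N ≤ x ^ i * y ^ N := by
  obtain ⟨j, rfl⟩ := Nat.exists_eq_add_of_le hi
  rw [pow_add, pow_add]
  have := pow_le_pow_left₀ hx hxy j
  have := mul_nonneg (pow_nonneg hx i) (pow_nonneg (hx.trans hxy) i)
  nlinarith

lemma strictAntiOn_geomRatio (hN : 1 ≤ N) : StrictAntiOn (geomRatio N) (Ici 0) := by
  intro x (hx : 0 ≤ x) y (hy : 0 ≤ y) hxy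
  have key : (∑ i ∈ range N, y ^ i) * x ^ N < (∑ i ∈ range N, x ^ i) * y ^ N := by
    rw [sum_mul, sum_mul]
    refine sum_lt_sum (fun i hi => pow_mul_pow_le_pow_mul_pow hx hxy.le (mem_range.mp hi).le)
      ⟨0, mem_range.mpr hN, ?_⟩
    simpa using pow_lt_pow_left₀ hxy hx (by omega)
  rw [geomRatio, geomRatio, div_lt_div_iff₀ (geom_sum_pos hy (by omega))
    (geom_sum_pos hx (by omega)), geom_sum_succ', geom_sum_succ']
  linear_combination key

lemma ite_eq_mul_geomRatio (N : ℕ) (hx : 0 ≤ x) :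
    (if x = 1 then (N : ℝ) / ((N : ℝ) + 1) else 1 - (1 - x) / (1 - x ^ (N + 1)))
      = x * geomRatio N x := by
  split_ifs with h1
  · simp [h1, geomRatio]
  have hB : (∑ i ∈ range (N + 1), x ^ i) ≠ 0 := (geom_sum_pos hx (by omega)).ne'
  rw [← geom_sum_mul_neg, div_mul_cancel_right₀ (sub_ne_zero.mpr (Ne.symm h1)), geomRatio]
  field_simp
  rw [geom_sum_succ]
  ring

end geomRatio

section coupling

variable {ι : Type*} [Fintype ι] (a c : ι → ℝ) (ψ : ι → ℝ → ℝ)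

noncomputable def couplingProfile (T : ℝ) (k : ι) : ℝ := c k * T * ψ k (c k * T)

noncomputable def couplingGain (T : ℝ) : ℝ := ∑ k, c k * a k * ψ k (c k * T)

lemma sum_couplingProfile_mul (T : ℝ) :
    ∑ k, couplingProfile c ψ T k * a k = T * couplingGain a c ψ T := by
  rw [couplingGain, mul_sum]
  exact sum_congr rfl fun k _ => by rw [couplingProfile]; ring

variable {a c ψ}

lemma couplingGain_zero (hψ : ∀ k, ψ k 0 = 1) : couplingGain a c ψ 0 = ∑ k, c k * a k := by
  simp [couplingGain, hψ]

lemma continuousOn_couplingGain (hc : ∀ k, 0 < c k)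
    (hψ : ∀ k, ContinuousOn (ψ k) (Ici 0)) : ContinuousOn (couplingGain a c ψ) (Ici 0) :=
  continuousOn_finsetSum _ fun k _ => continuousOn_const.mul <|
    (hψ k).comp (continuousOn_const.mul continuousOn_id)
      fun _ (hT : 0 ≤ _) => mul_nonneg (hc k).le hT

variable [Nonempty ι] (ha : ∀ k, 0 < a k) (hc : ∀ k, 0 < c k)
include ha hc

lemma strictAntiOn_couplingGain (hψ : ∀ k, StrictAntiOn (ψ k) (Ici 0)) :
    StrictAntiOn (couplingGain a c ψ) (Ici 0) := by
  intro x (hx : 0 ≤ x) y (hy : 0 ≤ y) hxy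
  refine sum_lt_sum_of_nonempty univ_nonempty fun k _ => ?_
  refine mul_lt_mul_of_pos_left (hψ k ?_ ?_ (mul_lt_mul_of_pos_left hxy (hc k)))
    (mul_pos (hc k) (ha k))
  · exact mul_nonneg (hc k).le hx
  · exact mul_nonneg (hc k).le hy

lemma couplingGain_sum_lt_one (hψ : ∀ k x, 0 < x → x * ψ k x < 1) :
    couplingGain a c ψ (∑ k, a k) < 1 := by
  have hb : 0 < ∑ k, a k := sum_pos (fun k _ => ha k) univ_nonempty
  rw [← mul_lt_iff_lt_one_right hb, ← sum_couplingProfile_mul]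
  refine sum_lt_sum_of_nonempty univ_nonempty fun k _ => ?_
  rw [couplingProfile]
  exact mul_lt_of_lt_one_left (ha k) (hψ k _ (mul_pos (hc k) hb))

lemma exists_couplingGain_eq_one_iff (hψ0 : ∀ k, ψ k 0 = 1)
    (hcont : ∀ k, ContinuousOn (ψ k) (Ici 0)) (hanti : ∀ k, StrictAntiOn (ψ k) (Ici 0))
    (hbdd : ∀ k x, 0 < x → x * ψ k x < 1) :
    (∃ T, 0 < T ∧ couplingGain a c ψ T = 1) ↔ 1 < ∑ k, c k * a k := by
  have hgain_anti := strictAntiOn_couplingGain ha hc hanti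
  rw [← couplingGain_zero hψ0]
  constructor
  · rintro ⟨T, hT, hT1⟩
    exact hT1 ▸ hgain_anti self_mem_Ici hT.le hT
  · intro h0
    have hb : 0 < ∑ k, a k := sum_pos (fun k _ => ha k) univ_nonempty
    obtain ⟨T, hT, hT1⟩ := intermediate_value_Icc' hb.le
      ((continuousOn_couplingGain hc hcont).mono Icc_subset_Ici_self)
      ⟨(couplingGain_sum_lt_one ha hc hbdd).le, h0.le⟩
    exact ⟨T, hT.1.lt_of_ne (by rintro rfl; exact h0.ne' hT1), hT1⟩

variable (hψ0 : ∀ k, ψ k 0 = 1) (hcont : ∀ k, ContinuousOn (ψ k) (Ici 0))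
  (hanti : ∀ k, StrictAntiOn (ψ k) (Ici 0)) (hpos : ∀ k x, 0 < x → 0 < ψ k x)
  (hbdd : ∀ k x, 0 < x → x * ψ k x < 1)

omit hc in
lemma couplingGain_eq_one_of_fixed {ρ : ι → ℝ} (hρ : ∀ k, 0 < ρ k)
    (hfix : ∀ k, ρ k = couplingProfile c ψ (∑ j, ρ j * a j) k) :
    0 < ∑ j, ρ j * a j ∧ couplingGain a c ψ (∑ j, ρ j * a j) = 1 := by
  set T := ∑ j, ρ j * a j with hT
  have hT_pos : 0 < T := sum_pos (fun j _ => mul_pos (hρ j) (ha j)) univ_nonempty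
  have hT_eq : T * couplingGain a c ψ T = T := by
    rw [← sum_couplingProfile_mul, hT]
    exact sum_congr rfl fun j _ => congrArg (· * a j) (hfix j).symm
  exact ⟨hT_pos, (mul_eq_left₀ hT_pos.ne').mp hT_eq⟩

include hψ0 hcont hanti hpos hbdd

theorem exists_pos_fixedPt_iff_and_existsUnique :
    ((∃ ρ : ι → ℝ, (∀ k, 0 < ρ k) ∧ ∀ k, ρ k = couplingProfile c ψ (∑ j, ρ j * a j) k)
        ↔ 1 < ∑ k, c k * a k)
    ∧ (1 < ∑ k, c k * a k →
        ∃! ρ : ι → ℝ, (∀ k, 0 < ρ k) ∧ ∀ k, ρ k = couplingProfile c ψ (∑ j, ρ j * a j) k) := by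
  have hexists : (∃ ρ : ι → ℝ, (∀ k, 0 < ρ k) ∧
      ∀ k, ρ k = couplingProfile c ψ (∑ j, ρ j * a j) k) ↔ 1 < ∑ k, c k * a k := by
    rw [← exists_couplingGain_eq_one_iff ha hc hψ0 hcont hanti hbdd]
    constructor
    · rintro ⟨ρ, hρ, hfix⟩
      exact ⟨_, couplingGain_eq_one_of_fixed ha hρ hfix⟩
    · rintro ⟨T, hT, hT1⟩
      refine ⟨couplingProfile c ψ T, fun k => ?_, fun k => ?_⟩
      · have hcT := mul_pos (hc k) hT
        exact mul_pos hcT (hpos k _ hcT)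
      · rw [sum_couplingProfile_mul, hT1, mul_one]
  refine ⟨hexists, fun h => ?_⟩
  obtain ⟨ρ, hρ, hfix⟩ := hexists.mpr h
  refine ⟨ρ, ⟨hρ, hfix⟩, fun ρ' ⟨hρ', hfix'⟩ => ?_⟩
  obtain ⟨hT, hT1⟩ := couplingGain_eq_one_of_fixed ha hρ hfix
  obtain ⟨hT', hT1'⟩ := couplingGain_eq_one_of_fixed ha hρ' hfix'
  have hload := (strictAntiOn_couplingGain ha hc hanti).injOn hT'.le hT.le (hT1'.trans hT1.symm)
  funext k
  rw [hfix k, hfix' k, hload]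

end coupling

open Finset in
/-- Theorem 2: the availability fixed-point system `ρ_k = g_k(ρ)`, where
`s_k(ρ) = (μ_k/(P_c λ_u w_k))·Σ_j ρ_j λ_j w_j` and
`g_k(ρ) = 1 − (1 − s_k(ρ))/(1 − s_k(ρ)^(N_k+1))` (extended by `N_k/(N_k+1)` at
`s_k(ρ) = 1`), has a strictly positive solution iff `Σ_k λ_k μ_k > λ_u P_c`;
moreover, under this condition the positive solution is unique. -/
theorem stmt_9 (K : ℕ) (hK : 1 ≤ K) (lam mu w : Fin K → ℝ) (Nk : Fin K → ℕ)
    (hlam : ∀ k, 0 < lam k) (hmu : ∀ k, 0 < mu k) (hw : ∀ k, 0 < w k)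
    (hNk : ∀ k, 1 ≤ Nk k) (Pc lamu : ℝ) (hPc : 0 < Pc) (hlamu : 0 < lamu)
    (s : (Fin K → ℝ) → Fin K → ℝ)
    (hs : ∀ ρ k, s ρ k = mu k / (Pc * lamu * w k) * ∑ j, ρ j * lam j * w j)
    (g : (Fin K → ℝ) → Fin K → ℝ)
    (hg : ∀ ρ k, g ρ k = if s ρ k = 1 then (Nk k : ℝ) / ((Nk k : ℝ) + 1)
      else 1 - (1 - s ρ k) / (1 - s ρ k ^ (Nk k + 1))) :
    ((∃ ρ : Fin K → ℝ, (∀ k, 0 < ρ k) ∧ ∀ k, ρ k = g ρ k)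
        ↔ ∑ k, lam k * mu k > lamu * Pc)
    ∧ (∑ k, lam k * mu k > lamu * Pc →
        ∃! ρ : Fin K → ℝ, (∀ k, 0 < ρ k) ∧ ∀ k, ρ k = g ρ k) := by
  have : Nonempty (Fin K) := ⟨⟨0, hK⟩⟩
  set a : Fin K → ℝ := fun k => lam k * w k
  set c : Fin K → ℝ := fun k => mu k / (Pc * lamu * w k)
  have ha : ∀ k, 0 < a k := fun k => mul_pos (hlam k) (hw k)
  have hc : ∀ k, 0 < c k := fun k => div_pos (hmu k) (by have := hw k; positivity)
  have hgain : 1 < ∑ k, c k * a k ↔ ∑ k, lam k * mu k > lamu * Pc := by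
    have hca : ∀ k, c k * a k = lam k * mu k / (lamu * Pc) := fun k => by
      simp only [c, a]; field_simp [(hw k).ne']
    rw [sum_congr rfl fun k _ => hca k, ← sum_div, one_lt_div (by positivity)]
  have hfix : ∀ ρ : Fin K → ℝ, ((∀ k, 0 < ρ k) ∧ ∀ k, ρ k = g ρ k) ↔
      ((∀ k, 0 < ρ k) ∧ ∀ k, ρ k = couplingProfile c (fun k => geomRatio (Nk k))
        (∑ j, ρ j * a j) k) := by
    refine fun ρ => and_congr_right fun hρ => forall_congr' fun k => ?_
    have hload : ∑ j, ρ j * lam j * w j = ∑ j, ρ j * a j := by simp only [a, mul_assoc]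
    have hs_pos : 0 < s ρ k := by
      rw [hs, hload]
      exact mul_pos (hc k) (sum_pos (fun j _ => mul_pos (hρ j) (ha j)) univ_nonempty)
    rw [hg, ite_eq_mul_geomRatio _ hs_pos.le, hs, hload, couplingProfile]
  simp only [hfix, ← hgain]
  exact exists_pos_fixedPt_iff_and_existsUnique ha hc (fun k => geomRatio_zero (hNk k))
    (fun k => continuousOn_geomRatio _) (fun k => strictAntiOn_geomRatio (hNk k))
    (fun k _ hx => geomRatio_pos (hNk k) hx.le) (fun k _ hx => mul_geomRatio_lt_one hx.le)
end

section
/- Let μ, ν > 0 be real numbers and N ≥ 1 an integer. Let B be the N×N real matrix indexed by 1,…,N with B(i,i) = −(μ+ν) for 1 ≤ i ≤ N−1, B(N,N) = −ν, B(i,i+1) = μ for 1 ≤ i ≤ N−1, B(i,i−1) = ν for 2 ≤ i ≤ N, and all other entries 0. Define the N×N matrix M by M(i,j) = ν^(−j) · Σ_{n=1}^{min(i,j)} μ^(j−n)·ν^(n−1). Then (−B)·M is the identity matrix; in particular −B is invertible and (−B)^(−1)(i,j) = ν^(−j) · Σ_{n=1}^{min(i,j)} μ^(j−n)·ν^(n−1).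 -/
/-!
Write column `j` of `M` as `y (k + 1)` for `k : Fin N`, where `y m` is the same formula at an
arbitrary level `m : ℕ`. Then `y 0 = 0` (the absorbing level `0`) and the increments are
`y (m + 1) - y m = μ ^ (j - m) * ν ^ m / ν ^ (j + 1)` for `m ≤ j` and `0` beyond, so `y` is
constant past level `j + 1`, in particular at the reflecting end `N`. With these two boundary
values every row of `-B` acts as `ν (y (i + 1) - y i) - μ (y (i + 2) - y (i + 1))`, and on
consecutive increments of `y` this combination is `1` for `i = j` and `0` otherwise.
-/

open Finset

/-- Index `i` stands for level `i + 1`. -/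
def killedGenerator (μ ν : ℝ) (N i k : ℕ) : ℝ :=
  if k = i + 1 then μ else if k + 1 = i then ν
  else if i = k then (if i + 1 = N then -ν else -(μ + ν)) else 0

theorem killedGenerator_eq (μ ν : ℝ) (N i k : ℕ) :
    killedGenerator μ ν N i k = (if k = i + 1 then μ else 0) + (if k + 1 = i then ν else 0)
      + (if k = i then (if i + 1 = N then μ else 0) - (μ + ν) else 0) := by
  unfold killedGenerator
  split_ifs <;> first | omega | ring

theorem sum_killedGenerator_mul (μ ν : ℝ) {N i : ℕ} (hi : i < N) (y : ℕ → ℝ) (h0 : y 0 = 0)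
    (hN : y (N + 1) = y N) :
    ∑ k ∈ range N, killedGenerator μ ν N i k * y (k + 1) =
      μ * (y (i + 2) - y (i + 1)) + ν * (y i - y (i + 1)) := by
  have hleft : ∑ k ∈ range N, (if k + 1 = i then ν * y (k + 1) else 0) = ν * y i := by
    cases i with
    | zero => simp [h0]
    | succ i => simp [sum_ite_eq', show i < N by omega]
  simp only [killedGenerator_eq, add_mul, ite_mul, zero_mul, sum_add_distrib, sum_ite_eq', hleft,
    mem_range, hi, if_true]
  rcases (Nat.succ_le_of_lt hi).eq_or_lt with hlast | hint
  · subst hlast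
    simp only [lt_irrefl, if_false, if_true, hN]
    ring
  · simp only [hint, hint.ne, if_true, if_false]
    ring

noncomputable def inverseColumn (μ ν : ℝ) (J m : ℕ) : ℝ :=
  (ν ^ J)⁻¹ * ∑ n ∈ Icc 1 (min m J), μ ^ (J - n) * ν ^ (n - 1)

theorem inverseColumn_zero (μ ν : ℝ) (J : ℕ) : inverseColumn μ ν J 0 = 0 := by
  simp [inverseColumn]

theorem inverseColumn_succ_sub (μ ν : ℝ) (j m : ℕ) :
    inverseColumn μ ν (j + 1) (m + 1) - inverseColumn μ ν (j + 1) m =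
      if m ≤ j then μ ^ (j - m) * ν ^ m / ν ^ (j + 1) else 0 := by
  unfold inverseColumn
  rw [← mul_sub]
  split_ifs with hm
  · rw [min_eq_left (by omega), min_eq_left (by omega), sum_Icc_succ_top (by omega)]
    simp only [add_sub_cancel_left, Nat.add_sub_cancel, Nat.add_sub_add_right]
    ring
  · rw [min_eq_right (by omega), min_eq_right (by omega), sub_self, mul_zero]

theorem inverseColumn_generator_eq {ν : ℝ} (hν : ν ≠ 0) (μ : ℝ) (i j : ℕ) :
    ν * (inverseColumn μ ν (j + 1) (i + 1) - inverseColumn μ ν (j + 1) i)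
      - μ * (inverseColumn μ ν (j + 1) (i + 2) - inverseColumn μ ν (j + 1) (i + 1)) =
      if i = j then 1 else 0 := by
  rw [inverseColumn_succ_sub, inverseColumn_succ_sub]
  rcases lt_trichotomy i j with hij | rfl | hij
  · obtain ⟨t, rfl⟩ := Nat.exists_eq_add_of_lt hij
    simp only [show i ≤ i + t + 1 by omega, show i + 1 ≤ i + t + 1 by omega, hij.ne, if_true,
      if_false, show i + t + 1 - i = t + 1 by omega, show i + t + 1 - (i + 1) = t by omega]
    field_simp
    ring
  · simp only [le_refl, Nat.sub_self, if_true, show ¬ i + 1 ≤ i by omega, if_false]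
    field_simp
    ring
  · simp [show ¬ i ≤ j by omega, show ¬ i + 1 ≤ j by omega, hij.ne']

theorem stmt_12_general (μ ν : ℝ) (hν : 0 < ν) (N : ℕ)
    (B M : Matrix (Fin N) (Fin N) ℝ)
    (hB : ∀ i j : Fin N,
      B i j = if (j : ℕ) = (i : ℕ) + 1 then μ
        else if (j : ℕ) + 1 = (i : ℕ) then ν
        else if i = j then (if (i : ℕ) + 1 = N then -ν else -(μ + ν))
        else 0)
    (hM : ∀ i j : Fin N,
      M i j = (ν ^ ((j : ℕ) + 1))⁻¹ *
        ∑ n ∈ Finset.Icc 1 (min ((i : ℕ) + 1) ((j : ℕ) + 1)),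
          μ ^ ((j : ℕ) + 1 - n) * ν ^ (n - 1)) :
    (-B) * M = 1 ∧ IsUnit (-B) ∧ (-B)⁻¹ = M := by
  have hBgen : ∀ i k : Fin N, B i k = killedGenerator μ ν N i k := by
    intro i k
    simp only [hB, killedGenerator, ← Fin.val_inj]
  have hinv : (-B) * M = 1 := by
    ext i j
    set y := inverseColumn μ ν (j + 1)
    have hMy : ∀ k, M k j = y (k + 1) := fun k => hM k j
    have hflat : y (N + 1) = y N := by
      rw [← sub_eq_zero, inverseColumn_succ_sub, if_neg (by omega)]
    have hrow := sum_killedGenerator_mul μ ν i.isLt y (inverseColumn_zero μ ν _) hflat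
    simp only [Matrix.mul_apply, Matrix.one_apply, ← Fin.val_inj, Matrix.neg_apply, hBgen, hMy,
      neg_mul, sum_neg_distrib]
    rw [← inverseColumn_generator_eq hν.ne' μ,
      Fin.sum_univ_eq_sum_range (fun k => killedGenerator μ ν N i k * y (k + 1)), hrow]
    ring
  exact ⟨hinv, .of_mul_eq_one M hinv, Matrix.inv_eq_right_inv hinv⟩

open Finset in
/-- Equation (17): for the matrix `B` obtained from the birth-death generator by
deleting the row and column of state `0` (states `1,…,N` are encoded by `Fin N`,
with index `i` standing for state `i+1`), the matrix
`M(i,j) = ν^(−j)·Σ_{n=1}^{min(i,j)} μ^(j−n)·ν^(n−1)` satisfies `(−B)·M = 1`;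
in particular `−B` is invertible with inverse `M`. -/
theorem stmt_12 (μ ν : ℝ) (hμ : 0 < μ) (hν : 0 < ν) (N : ℕ) (hN : 1 ≤ N)
    (B M : Matrix (Fin N) (Fin N) ℝ)
    (hB : ∀ i j : Fin N,
      B i j = if (j : ℕ) = (i : ℕ) + 1 then μ
        else if (j : ℕ) + 1 = (i : ℕ) then ν
        else if i = j then (if (i : ℕ) + 1 = N then -ν else -(μ + ν))
        else 0)
    (hM : ∀ i j : Fin N,
      M i j = (ν ^ ((j : ℕ) + 1))⁻¹ *
        ∑ n ∈ Finset.Icc 1 (min ((i : ℕ) + 1) ((j : ℕ) + 1)),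
          μ ^ ((j : ℕ) + 1 - n) * ν ^ (n - 1)) :
    (-B) * M = 1 ∧ IsUnit (-B) ∧ (-B)⁻¹ = M :=
  stmt_12_general μ ν hν N B M hB hM
end

section
/- Let μ, ν > 0 be real numbers with μ ≠ ν and N ≥ 1 an integer. Let B be the N×N real matrix indexed by 1,…,N with B(i,i) = −(μ+ν) for 1 ≤ i ≤ N−1, B(N,N) = −ν, B(i,i+1) = μ for 1 ≤ i ≤ N−1, B(i,i−1) = ν for 2 ≤ i ≤ N, and all other entries 0. If t ∈ ℝ^N satisfies (−B)·t = 𝟙, where 𝟙 is the all-ones vector, then t(1) = (1/ν)·(1 − (μ/ν)^N)/(1 − μ/ν). -/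
open Finset Matrix

/-!
Extend `t` to energy levels by `T 0 = 0`, `T (i + 1) = t i`. The row equations of `(-B) t = 𝟙`
say that the increments `d k = T (k + 1) - T k` satisfy `ν d k = 1 + μ d (k + 1)` below the top
level and `ν d (N - 1) = 1` at it, so unwinding from the top gives `ν d k` as a geometric sum in
`μ / ν`; at `k = 0` the increment is `t 0` itself.
-/

/-- Entry `i : Fin N` of `t` read as the value at energy level `i + 1`; levels `0` and `> N`
carry `0`. -/
def toLevels {M : Type*} [Zero M] {N : ℕ} (t : Fin N → M) (k : ℕ) : M :=
  if h : 1 ≤ k ∧ k ≤ N then t ⟨k - 1, by omega⟩ else 0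

@[simp]
theorem toLevels_zero {M : Type*} [Zero M] {N : ℕ} (t : Fin N → M) : toLevels t 0 = 0 := by
  simp [toLevels]

@[simp]
theorem toLevels_succ {M : Type*} [Zero M] {N : ℕ} (t : Fin N → M) (i : Fin N) :
    toLevels t (i + 1) = t i := by
  simp [toLevels, Nat.succ_le_of_lt i.isLt]

theorem toLevels_of_lt {M : Type*} [Zero M] {N k : ℕ} (t : Fin N → M) (hk : N < k) :
    toLevels t k = 0 := by
  simp [toLevels, hk.not_ge]

theorem sum_ite_succ_eq_mul_toLevels {R : Type*} [Semiring R] {N : ℕ} (t : Fin N → R)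
    (a : R) (m : ℕ) :
    ∑ j : Fin N, (if (j : ℕ) + 1 = m then a * t j else 0) = a * toLevels t m := by
  unfold toLevels
  split_ifs with hm
  · rw [sum_eq_single ⟨m - 1, by omega⟩]
    · simp [show m - 1 + 1 = m by omega]
    · intro j _ hj
      rw [if_neg]
      contrapose! hj
      ext
      simp only
      omega
    · simp
  · rw [mul_zero]
    refine sum_eq_zero fun j _ => ?_
    rw [if_neg]
    have := j.isLt
    omega

def birthDeathBlock {R : Type*} [Ring R] (μ ν : R) (N : ℕ) : Matrix (Fin N) (Fin N) R :=
  Matrix.of fun i j =>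
    if (j : ℕ) = (i : ℕ) + 1 then μ
    else if (j : ℕ) + 1 = (i : ℕ) then ν
    else if i = j then (if (i : ℕ) + 1 = N then -ν else -(μ + ν))
    else 0

-- `j = i + 1` is written `j + 1 = i + 2` so that both off-diagonal terms have the shape of
-- `sum_ite_succ_eq_mul_toLevels`.
theorem birthDeathBlock_apply_eq_add {R : Type*} [Ring R] (μ ν : R) {N : ℕ} (i j : Fin N) :
    birthDeathBlock μ ν N i j =
      (if (j : ℕ) + 1 = i + 2 then μ else 0) + (if (j : ℕ) + 1 = i then ν else 0)
        + (if i = j then (if (i : ℕ) + 1 = N then -ν else -(μ + ν)) else 0) := by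
  simp only [birthDeathBlock, Matrix.of_apply, Fin.ext_iff]
  split_ifs <;> (try omega) <;> simp

theorem birthDeathBlock_mulVec_apply {R : Type*} [CommRing R] (μ ν : R) {N : ℕ}
    (t : Fin N → R) (i : Fin N) :
    (birthDeathBlock μ ν N *ᵥ t) i = μ * toLevels t (i + 2) + ν * toLevels t i
      - (if (i : ℕ) + 1 = N then ν else μ + ν) * toLevels t (i + 1) := by
  simp only [Matrix.mulVec, dotProduct, birthDeathBlock_apply_eq_add, add_mul,
    sum_add_distrib, sum_ite_succ_eq_mul_toLevels, ite_mul, zero_mul, sum_ite_eq, mem_univ,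
    if_true, toLevels_succ]
  split_ifs <;> ring

theorem mul_eq_geom_sum_of_recurrence {K : Type*} [Field K] {μ ν : K} (hν : ν ≠ 0) {n : ℕ}
    {d : ℕ → K} (hrec : ∀ k < n, ν * d k = 1 + μ * d (k + 1)) (hlast : ν * d n = 1)
    {k : ℕ} (hk : k ≤ n) :
    ν * d k = ∑ i ∈ range (n + 1 - k), (μ / ν) ^ i := by
  induction hk using Nat.decreasingInduction with
  | self => simp [hlast]
  | of_succ k hk ih =>
    rw [hrec k hk, show n + 1 - k = n + 1 - (k + 1) + 1 by omega, geom_sum_succ, ← ih]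
    field_simp
    ring

theorem increment_recurrence_of_neg_mulVec_eq_one {R : Type*} [CommRing R] {μ ν : R} {N : ℕ}
    {t : Fin N → R} (ht : -birthDeathBlock μ ν N *ᵥ t = fun _ => 1) {k : ℕ}
    (hk : k + 1 < N) :
    ν * (toLevels t (k + 1) - toLevels t k)
      = 1 + μ * (toLevels t (k + 2) - toLevels t (k + 1)) := by
  have hrow := congrFun ht ⟨k, by omega⟩
  simp only [neg_mulVec, Pi.neg_apply, birthDeathBlock_mulVec_apply, hk.ne, if_false] at hrow
  linear_combination hrow

theorem top_increment_of_neg_mulVec_eq_one {R : Type*} [CommRing R] {μ ν : R} {n : ℕ}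
    {t : Fin (n + 1) → R} (ht : -birthDeathBlock μ ν (n + 1) *ᵥ t = fun _ => 1) :
    ν * (toLevels t (n + 1) - toLevels t n) = 1 := by
  have hrow := congrFun ht (Fin.last n)
  simp only [neg_mulVec, Pi.neg_apply, birthDeathBlock_mulVec_apply, Fin.val_last, if_true,
    toLevels_of_lt t (show n + 1 < n + 2 by omega)] at hrow
  linear_combination hrow

/-- Mean ON time under Policy 1: if `t` solves `(−B)·t = 𝟙` for the matrix `B`
obtained from the birth-death generator (harvesting rate `μ`, utilization rate `ν`,
`μ ≠ ν`) by deleting state `0` (index `i : Fin N` stands for energy level `i+1`),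
then the mean hitting time of level `0` from level `1` is
`t(1) = (1/ν)·(1 − (μ/ν)^N)/(1 − μ/ν)`. -/
theorem stmt_13 (μ ν : ℝ) (hν : 0 < ν) (hne : μ ≠ ν)
    (N : ℕ) (hN : 1 ≤ N)
    (B : Matrix (Fin N) (Fin N) ℝ)
    (hB : ∀ i j : Fin N,
      B i j = if (j : ℕ) = (i : ℕ) + 1 then μ
        else if (j : ℕ) + 1 = (i : ℕ) then ν
        else if i = j then (if (i : ℕ) + 1 = N then -ν else -(μ + ν))
        else 0)
    (t : Fin N → ℝ)
    (ht : (-B).mulVec t = fun _ => 1) :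
    t ⟨0, by omega⟩ = 1 / ν * ((1 - (μ / ν) ^ N) / (1 - μ / ν)) := by
  obtain rfl : B = birthDeathBlock μ ν N := Matrix.ext hB
  obtain ⟨n, rfl⟩ : ∃ n, N = n + 1 := ⟨N - 1, by omega⟩
  have hflux := mul_eq_geom_sum_of_recurrence (d := fun k => toLevels t (k + 1) - toLevels t k)
    hν.ne' (fun k hk => increment_recurrence_of_neg_mulVec_eq_one ht (by omega))
    (top_increment_of_neg_mulVec_eq_one ht) (Nat.zero_le n)
  have hr : μ / ν ≠ 1 := by rwa [ne_eq, div_eq_one_iff_eq hν.ne']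
  rw [zero_add, toLevels_succ t ⟨0, by omega⟩, toLevels_zero, sub_zero, Nat.sub_zero,
    geom_sum_eq hr] at hflux
  rw [← neg_div_neg_eq (1 - _), neg_sub, neg_sub, ← hflux, one_div,
    inv_mul_cancel_left₀ hν.ne']
end

section
/- Let μ, ν > 0 be real numbers with μ ≠ ν and N ≥ 1 an integer. Let B be the N×N real matrix indexed by 1,…,N with B(i,i) = −(μ+ν) for 1 ≤ i ≤ N−1, B(N,N) = −ν, B(i,i+1) = μ for 1 ≤ i ≤ N−1, B(i,i−1) = ν for 2 ≤ i ≤ N, and all other entries 0. If t ∈ ℝ^N satisfies (−B)·t = 𝟙, where 𝟙 is the all-ones vector, then t(N) = (1/(μ−ν))·(μ/ν)·(1 − (μ/ν)^N)/(1 − μ/ν) − N/(μ−ν). -/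
/-!
Extend `t` to a function `T` of the energy level with `T 0 = 0`. The rows of `(-B) t = 𝟙` say
that the increments `δ k = T (k + 1) - T k` satisfy `ν δ k - μ δ (k + 1) = 1` below the top level
and `ν δ (N - 1) = 1` at it. Solving this first-order recursion downwards from the top gives
`δ k = ((μ / ν) ^ (N - k) - 1) / (μ - ν)`, and `t(N)` is the telescoping sum of the increments,
a geometric series.
-/

open Finset Matrix

/-- `t` as a function of the energy level: `t i` belongs to level `i + 1`. -/
noncomputable def levelExt {N : ℕ} (t : Fin N → ℝ) : ℕ → ℝ
  | 0 => 0
  | k + 1 => if h : k < N then t ⟨k, h⟩ else 0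

lemma sum_ite_succ_eq_levelExt {N : ℕ} (t : Fin N → ℝ) (x : ℝ) (m : ℕ) :
    ∑ j : Fin N, (if (j : ℕ) + 1 = m then x * t j else 0) = x * levelExt t m := by
  rcases m with _ | m
  · simp [levelExt]
  simp only [Nat.add_right_cancel_iff, levelExt]
  split_ifs with hm
  · rw [Fintype.sum_eq_single ⟨m, hm⟩ fun j hj => if_neg fun h => hj (Fin.ext h)]
    simp
  · rw [mul_zero]
    exact sum_eq_zero fun (j : Fin N) _ => if_neg (j.isLt.trans_le (not_lt.mp hm)).ne

lemma mulVec_apply_of_tridiagonal {N : ℕ} (B : Matrix (Fin N) (Fin N) ℝ) (a b : ℝ)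
    (c : Fin N → ℝ)
    (hB : ∀ i j : Fin N, B i j = if (j : ℕ) = (i : ℕ) + 1 then a
      else if (j : ℕ) + 1 = (i : ℕ) then b else if i = j then c i else 0)
    (t : Fin N → ℝ) (i : Fin N) :
    (B *ᵥ t) i = a * levelExt t (i + 2) + b * levelExt t i + c i * levelExt t (i + 1) := by
  have hentry : ∀ j, B i j * t j = (if (j : ℕ) + 1 = i + 2 then a * t j else 0)
      + (if (j : ℕ) + 1 = i then b * t j else 0)
      + (if (j : ℕ) + 1 = i + 1 then c i * t j else 0) := by
    intro j
    rw [hB]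
    simp only [Fin.ext_iff]
    split_ifs <;> first | omega | ring
  simp only [mulVec, dotProduct, hentry, sum_add_distrib, sum_ite_succ_eq_levelExt]

section BirthDeath

variable {μ ν : ℝ}

lemma diff_eq_of_backward_recursion (hν : ν ≠ 0) (hne : μ ≠ ν) {n : ℕ} (δ : ℕ → ℝ)
    (htop : ν * δ n = 1) (hrec : ∀ k < n, ν * δ k - μ * δ (k + 1) = 1) {k : ℕ} (hk : k ≤ n) :
    δ k = ((μ / ν) ^ (n + 1 - k) - 1) / (μ - ν) := by
  have hμν : μ - ν ≠ 0 := sub_ne_zero.mpr hne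
  induction hk using Nat.decreasingInduction with
  | self =>
    rw [Nat.add_sub_cancel_left, pow_one, eq_div_iff hμν]
    field_simp
    linarith
  | of_succ k hk ih =>
    have h := hrec k hk
    rw [ih, show n + 1 - k = (n + 1 - (k + 1)) + 1 by omega, pow_succ] at *
    rw [eq_div_iff hμν]
    field_simp at h ⊢
    linarith

lemma sum_pow_sub_one_div (hν : ν ≠ 0) (hne : μ ≠ ν) (N : ℕ) :
    ∑ k ∈ range N, ((μ / ν) ^ (N - k) - 1) / (μ - ν) =
      1 / (μ - ν) * (μ / ν) * ((1 - (μ / ν) ^ N) / (1 - μ / ν)) - N / (μ - ν) := by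
  have hr : μ / ν ≠ 1 := by rwa [ne_eq, div_eq_one_iff_eq hν]
  have hreflect : ∑ k ∈ range N, (μ / ν) ^ (N - k) = ∑ k ∈ range N, (μ / ν) ^ (k + 1) := by
    rw [← sum_range_reflect]
    exact sum_congr rfl fun k hk => by rw [mem_range] at hk; congr 1; omega
  rw [← sum_div, sum_sub_distrib, hreflect]
  simp only [pow_succ, ← sum_mul, geom_sum_eq hr, sum_const, card_range, nsmul_eq_mul, mul_one]
  have h1 : 1 - μ / ν ≠ 0 := sub_ne_zero.mpr hr.symm
  have h2 : μ / ν - 1 ≠ 0 := sub_ne_zero.mpr hr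
  field_simp
  ring

lemma hitting_time_top_eq (hν : ν ≠ 0) (hne : μ ≠ ν) {n : ℕ} (T : ℕ → ℝ) (h0 : T 0 = 0)
    (hrow : ∀ k < n, (μ + ν) * T (k + 1) - μ * T (k + 2) - ν * T k = 1)
    (htop : ν * (T (n + 1) - T n) = 1) :
    T (n + 1) = 1 / (μ - ν) * (μ / ν) * ((1 - (μ / ν) ^ (n + 1)) / (1 - μ / ν))
      - ((n + 1 : ℕ) : ℝ) / (μ - ν) := by
  have hdiff : ∀ k ≤ n, T (k + 1) - T k = ((μ / ν) ^ (n + 1 - k) - 1) / (μ - ν) :=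
    fun k hk => diff_eq_of_backward_recursion hν hne (fun k => T (k + 1) - T k) htop
      (fun j hj => by linarith [hrow j hj]) hk
  calc T (n + 1) = ∑ k ∈ range (n + 1), (T (k + 1) - T k) := by rw [sum_range_sub, h0, sub_zero]
    _ = ∑ k ∈ range (n + 1), ((μ / ν) ^ (n + 1 - k) - 1) / (μ - ν) :=
      sum_congr rfl fun k hk => hdiff k (Nat.lt_succ_iff.mp (mem_range.mp hk))
    _ = _ := sum_pow_sub_one_div hν hne (n + 1)

end BirthDeath

/-- Mean ON time under Policy 2: if `t` solves `(−B)·t = 𝟙` for the matrix `B`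
obtained from the birth-death generator (harvesting rate `μ`, utilization rate `ν`,
`μ ≠ ν`) by deleting state `0` (index `i : Fin N` stands for energy level `i+1`),
then the mean hitting time of level `0` from the full level `N` is
`t(N) = (1/(μ−ν))·(μ/ν)·(1 − (μ/ν)^N)/(1 − μ/ν) − N/(μ−ν)`. -/
theorem stmt_14 (μ ν : ℝ) (hν : 0 < ν) (hne : μ ≠ ν)
    (N : ℕ) (hN : 1 ≤ N)
    (B : Matrix (Fin N) (Fin N) ℝ)
    (hB : ∀ i j : Fin N,
      B i j = if (j : ℕ) = (i : ℕ) + 1 then μ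
        else if (j : ℕ) + 1 = (i : ℕ) then ν
        else if i = j then (if (i : ℕ) + 1 = N then -ν else -(μ + ν))
        else 0)
    (t : Fin N → ℝ)
    (ht : (-B).mulVec t = fun _ => 1) :
    t ⟨N - 1, by omega⟩ =
      1 / (μ - ν) * (μ / ν) * ((1 - (μ / ν) ^ N) / (1 - μ / ν)) - N / (μ - ν) := by
  obtain ⟨n, rfl⟩ := Nat.exists_eq_add_of_le' hN
  have hrow : ∀ i : Fin (n + 1), -(μ * levelExt t (i + 2) + ν * levelExt t i
      + (if (i : ℕ) + 1 = n + 1 then -ν else -(μ + ν)) * levelExt t (i + 1)) = 1 := fun i => by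
    rw [← mulVec_apply_of_tridiagonal B μ ν _ hB t i, ← Pi.neg_apply, ← neg_mulVec, ht]
  have hlevel : t ⟨n + 1 - 1, by omega⟩ = levelExt t (n + 1) := by simp [levelExt]
  rw [hlevel]
  refine hitting_time_top_eq hν.ne' hne (levelExt t) rfl (fun k hk => ?_) ?_
  · have h := hrow ⟨k, by omega⟩
    simp only [show k + 1 ≠ n + 1 by omega, if_false] at h
    linarith
  · have h := hrow (Fin.last n)
    simp only [Fin.val_last, if_true, show levelExt t (n + 2) = 0 by simp [levelExt]] at h
    linarith
end

section
/- Let μ, ν > 0 be real numbers and N ≥ 1 an integer. Let B be the N×N real matrix indexed by 1,…,N with B(i,i) = −(μ+ν) for 1 ≤ i ≤ N−1, B(N,N) = −ν, B(i,i+1) = μ for 1 ≤ i ≤ N−1, B(i,i−1) = ν for 2 ≤ i ≤ N, and all other entries 0. If t ∈ ℝ^N satisfies (−B)·t = 𝟙, then t(i)/i < t(1) for every integer i with 2 ≤ i ≤ N; that is, the maximum of t(i)/i over 1 ≤ i ≤ N is attained uniquely at i = 1. -/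
/-!
Extend `t` to a function `T` of the energy level by `T 0 = 0` and `T (N + 1) = T N`. Every row
of `(-B) t = 𝟙` then reads `ν D k - μ D (k + 1) = 1` for the increments `D k = T (k + 1) - T k`,
with `D N = 0`. Hence `D (N - 1) - D N = 1 / ν > 0` and
`ν (D k - D (k + 1)) = μ (D (k + 1) - D (k + 2))`, so the increments strictly decrease and
`T i = D 0 + ⋯ + D (i - 1) < i * D 0 = i * T 1`.
-/

open Finset

lemma strictAntiOn_Iic_of_mul_sub_mul_eq_one {μ ν : ℝ} (hμ : 0 < μ) (hν : 0 < ν) {D : ℕ → ℝ}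
    {n : ℕ} (hrec : ∀ k ≤ n, ν * D k - μ * D (k + 1) = 1) (hlast : D (n + 1) = 0) :
    StrictAntiOn D (Set.Iic (n + 1)) := by
  refine strictAntiOn_Iic_of_succ_lt fun m hm => ?_
  obtain hmn : m ≤ n := Nat.le_of_lt_succ hm
  clear hm
  rw [Order.succ_eq_add_one]
  induction hmn using Nat.decreasingInduction with
  | self =>
    have hn : ν * D n = 1 := by simpa [hlast] using hrec n le_rfl
    rw [hlast]
    exact pos_of_mul_pos_right (hn ▸ one_pos) hν.le
  | of_succ k hk ih =>
    have hstep : ν * (D k - D (k + 1)) = μ * (D (k + 1) - D (k + 2)) := by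
      linarith [hrec k hk.le, hrec (k + 1) hk]
    have hpos : 0 < ν * (D k - D (k + 1)) := hstep ▸ mul_pos hμ (sub_pos.2 ih)
    exact sub_pos.1 (pos_of_mul_pos_right hpos hν.le)

lemma sum_range_lt_nsmul_of_strictAntiOn {M : Type*} [AddCommMonoid M] [PartialOrder M]
    [IsOrderedCancelAddMonoid M] {D : ℕ → M} {i : ℕ} (hD : StrictAntiOn D (Set.Iio i))
    (hi : 1 < i) : ∑ j ∈ range i, D j < i • D 0 := by
  have h0 : (0 : ℕ) ∈ Set.Iio i := Set.mem_Iio.2 (by omega)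
  calc ∑ j ∈ range i, D j < ∑ _j ∈ range i, D 0 :=
        sum_lt_sum (fun j hj => hD.antitoneOn h0 (by simpa using hj) (Nat.zero_le j))
          ⟨1, mem_range.2 hi, hD h0 hi Nat.zero_lt_one⟩
    _ = i • D 0 := by rw [sum_const, card_range]

/-- The mean ON time as a function of the energy level: `t j` belongs to level `j + 1`, level `0`
is absorbing, and level `n + 2` is a copy of the top level `n + 1`. -/
def levelTime {n : ℕ} (t : Fin (n + 1) → ℝ) : ℕ → ℝ
  | 0 => 0
  | i + 1 => t ⟨min i n, Nat.lt_succ_of_le (min_le_right i n)⟩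

@[simp]
lemma levelTime_zero {n : ℕ} (t : Fin (n + 1) → ℝ) : levelTime t 0 = 0 := rfl

lemma levelTime_succ {n i : ℕ} (t : Fin (n + 1) → ℝ) (hi : i < n + 1) :
    levelTime t (i + 1) = t ⟨i, hi⟩ := by
  simp [levelTime, Nat.le_of_lt_succ hi]

lemma levelTime_reflect {n : ℕ} (t : Fin (n + 1) → ℝ) :
    levelTime t (n + 2) = levelTime t (n + 1) := by
  simp [levelTime]

lemma neg_mulVec_apply_eq_increments {n : ℕ} (μ ν : ℝ) (B : Matrix (Fin (n + 1)) (Fin (n + 1)) ℝ)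
    (hB : ∀ i j : Fin (n + 1),
      B i j = if (j : ℕ) = (i : ℕ) + 1 then μ
        else if (j : ℕ) + 1 = (i : ℕ) then ν
        else if i = j then (if (i : ℕ) + 1 = n + 1 then -ν else -(μ + ν))
        else 0)
    (t : Fin (n + 1) → ℝ) (k : ℕ) (hk : k < n + 1) :
    (-B).mulVec t ⟨k, hk⟩ = ν * (levelTime t (k + 1) - levelTime t k)
      - μ * (levelTime t (k + 2) - levelTime t (k + 1)) := by
  -- the middle summand may be taken at `m = k - 1` also for `k = 0`, since `levelTime t 0 = 0`
  have hsum : (-B).mulVec t ⟨k, hk⟩ = ∑ m ∈ range (n + 1),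
      ((if m = k + 1 then -μ * levelTime t (k + 2) else 0)
        + (if m = k - 1 then -ν * levelTime t k else 0)
        + (if m = k then (if k = n then ν else μ + ν) * levelTime t (k + 1) else 0)) := by
    rw [Matrix.mulVec, dotProduct, sum_range]
    refine sum_congr rfl fun ⟨m, hm⟩ _ => ?_
    rw [Matrix.neg_apply, hB, ← levelTime_succ t hm]
    simp only [Fin.ext_iff]
    split_ifs <;> first
      | omega
      | (subst_vars; ring1)
      | (obtain ⟨rfl, rfl⟩ : k = 0 ∧ m = 0 := (by omega); simp)
  rw [hsum]
  -- in the top row `k = n`, the diagonal `-ν` matches the reflected level `n + 2`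
  simp only [sum_add_distrib, sum_ite_eq', mem_range]
  split_ifs <;> first | omega | (subst_vars; rw [levelTime_reflect]; ring1) | ring1

/-- Core of Theorem 3: if `t` solves `(−B)·t = 𝟙` for the matrix `B` obtained from
the birth-death generator (harvesting rate `μ`, utilization rate `ν`) by deleting
state `0` (index `i : Fin N` stands for energy level `i+1`), so that `t(i)` is the
mean ON time starting from energy level `i`, then `t(i)/i < t(1)` for every
`2 ≤ i ≤ N`: the maximum of `t(i)/i` is attained uniquely at `i = 1`. -/
theorem stmt_15 (μ ν : ℝ) (hμ : 0 < μ) (hν : 0 < ν) (N : ℕ) (hN : 1 ≤ N)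
    (B : Matrix (Fin N) (Fin N) ℝ)
    (hB : ∀ i j : Fin N,
      B i j = if (j : ℕ) = (i : ℕ) + 1 then μ
        else if (j : ℕ) + 1 = (i : ℕ) then ν
        else if i = j then (if (i : ℕ) + 1 = N then -ν else -(μ + ν))
        else 0)
    (t : Fin N → ℝ)
    (ht : (-B).mulVec t = fun _ => 1) :
    ∀ i : ℕ, ∀ _ : 2 ≤ i, ∀ _ : i ≤ N,
      t ⟨i - 1, by omega⟩ / (i : ℝ) < t ⟨0, by omega⟩ := by
  obtain ⟨n, rfl⟩ : ∃ n, N = n + 1 := ⟨N - 1, by omega⟩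
  have hrow (k : ℕ) (hk : k ≤ n) : ν * (levelTime t (k + 1) - levelTime t k)
      - μ * (levelTime t (k + 2) - levelTime t (k + 1)) = 1 := by
    rw [← neg_mulVec_apply_eq_increments μ ν B hB t k (by omega), ht]
  have hanti := strictAntiOn_Iic_of_mul_sub_mul_eq_one hμ hν
    (D := fun k => levelTime t (k + 1) - levelTime t k) hrow (sub_eq_zero.2 (levelTime_reflect t))
  intro i hi hiN
  have hti : t ⟨i - 1, by omega⟩ = ∑ j ∈ range i, (levelTime t (j + 1) - levelTime t j) := by
    obtain ⟨j, rfl⟩ : ∃ j, i = j + 1 := ⟨i - 1, by omega⟩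
    rw [sum_range_sub, levelTime_zero, sub_zero]
    exact (levelTime_succ t _).symm
  have ht0 : t ⟨0, by omega⟩ = levelTime t 1 - levelTime t 0 := by
    rw [levelTime_zero, sub_zero, levelTime_succ]
  rw [div_lt_iff₀ (by positivity), hti, ht0, mul_comm, ← nsmul_eq_mul]
  exact sum_range_lt_nsmul_of_strictAntiOn
    (hanti.mono (Set.Iio_subset_Iic_self.trans (Set.Iic_subset_Iic.2 hiN))) hi
end
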